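/- arXiv:1804.06270 — 3 statements merged into one kernel-verified Lean document; each statement's English description precedes it below -/
import Mathlib

section
/- Let $\sigma^{d+1}$ be the $(d+1)$-simplex on vertex set $\{0,1,\ldots,d+1\}$ and for $0\le i\le d+1$ let $\Gamma_i$ be the facet not containing vertex $i$. Then for $0\le i\le d$, the diamond complex $\Diamond(\Gamma_i)$ equals the join $\langle\{0,\ldots,i-1,v_i\}\rangle * \mathcal{C}_{d-i-1}(i+1,\ldots,d)$, where $\mathcal{C}_{d-i-1}(i+1,\ldots,d)$ is the boundary complex of the $(d-i-1)$-dimensional cross-polytope on vertex set $\{i+1,\ldots,d\}\cup\{v_{i+1},\ldots,v_d\}$ (with $\mathcal{C}_{-1}=\{\emptyset\}$), and $\Diamond(\Gamma_{d+1}) = \langle\{0,\ldots,d\}\rangle$. -/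
namespace Paper

/-- Ambient vertex type in dimension `d`: original vertices `0,…,d+1` (left)
and new vertices `v_0,…,v_d` (right). -/
abbrev V (d : ℕ) := Sum (Fin (d+2)) (Fin (d+1))

def origV (d m : ℕ) : V d := Sum.inl ⟨m % (d+2), Nat.mod_lt m (by omega)⟩
def newV (d m : ℕ) : V d := Sum.inr ⟨m % (d+1), Nat.mod_lt m (by omega)⟩

variable {W : Type*} [DecidableEq W] {W' : Type*} [DecidableEq W']

def IsComplex (Δ : Set (Finset W)) : Prop := ∀ F ∈ Δ, ∀ G, G ⊆ F → G ∈ Δ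

def isFacet (Δ : Set (Finset W)) (F : Finset W) : Prop :=
  F ∈ Δ ∧ ∀ G ∈ Δ, F ⊆ G → G = F

def simplexOn (A : Finset W) : Set (Finset W) := {F | F ⊆ A}

def bdrySimplex (A : Finset W) : Set (Finset W) := {F | F ⊂ A}

def joinC (Δ Γ : Set (Finset W)) : Set (Finset W) := {s | ∃ a ∈ Δ, ∃ b ∈ Γ, s = a ∪ b}

def lkC (Δ : Set (Finset W)) (F : Finset W) : Set (Finset W) :=
  {G | Disjoint F G ∧ F ∪ G ∈ Δ}

def delFace (Δ : Set (Finset W)) (F : Finset W) : Set (Finset W) := {G ∈ Δ | ¬ F ⊆ G}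

/-- Stellar subdivision at `F` with new vertex `v`. -/
def sdC (v : W) (F : Finset W) (Δ : Set (Finset W)) : Set (Finset W) :=
  delFace Δ F ∪ joinC (simplexOn {v}) (joinC (bdrySimplex F) (lkC Δ F))

/-- Deletion of a subcomplex: the complex generated by the facets of `Δ`
that are not facets of `Γ`. -/
def delSub (Δ Γ : Set (Finset W)) : Set (Finset W) :=
  {G | ∃ F, isFacet Δ F ∧ ¬ isFacet Γ F ∧ G ⊆ F}

def IsInduced (Γ Δ : Set (Finset W)) : Prop :=
  Γ ⊆ Δ ∧ ∀ F ∈ Δ, (∀ v ∈ F, ({v} : Finset W) ∈ Γ) → F ∈ Γ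

/-- Simplicial isomorphism (via a permutation of the ambient vertex set). -/
def IsoC (Δ Γ : Set (Finset W)) : Prop :=
  ∃ e : Equiv.Perm W, ∀ F : Finset W, F ∈ Δ ↔ F.image (⇑e) ∈ Γ

def mapC (f : W → W') (Δ : Set (Finset W)) : Set (Finset W') := {F | ∃ G ∈ Δ, F = G.image f}

/-- Number of faces of cardinality `i` (i.e. dimension `i-1`). -/
noncomputable def fnum (Δ : Set (Finset W)) (i : ℕ) : ℕ := {F | F ∈ Δ ∧ F.card = i}.ncard

/-- `h`-numbers of a `d`-dimensional complex. -/
noncomputable def hnum (d : ℕ) (Δ : Set (Finset W)) (j : ℕ) : ℤ :=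
  ∑ i ∈ Finset.range (j+1),
    (-1 : ℤ)^(j-i) * ((d+1-i).choose (d+1-j) : ℤ) * (fnum Δ i : ℤ)

/-- `R` is the restriction face of the `i`-th facet of the ordering `L`. -/
def IsRestriction (L : List (Finset W)) (i : ℕ) (R : Finset W) : Prop :=
  R ⊆ L.getD i ∅ ∧ (∀ j < i, ¬ R ⊆ L.getD j ∅) ∧
    ∀ G ⊆ L.getD i ∅, (∀ j < i, ¬ G ⊆ L.getD j ∅) → R ⊆ G

def IsShelling (Δ : Set (Finset W)) (L : List (Finset W)) : Prop :=
  L.Nodup ∧ (∀ F, F ∈ L ↔ isFacet Δ F) ∧ ∀ i < L.length, ∃ R, IsRestriction L i R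

def Shellable (Δ : Set (Finset W)) : Prop := ∃ L, IsShelling Δ L

def IsRelRestriction (Sg : Set (Finset W)) (L : List (Finset W)) (i : ℕ) (R : Finset W) : Prop :=
  R ⊆ L.getD i ∅ ∧ R ∉ Sg ∧ (∀ j < i, ¬ R ⊆ L.getD j ∅) ∧
    ∀ G ⊆ L.getD i ∅, G ∉ Sg → (∀ j < i, ¬ G ⊆ L.getD j ∅) → R ⊆ G

/-- Shelling of the relative complex `(Δ, Sg)`. -/
def IsRelShelling (Δ Sg : Set (Finset W)) (L : List (Finset W)) : Prop :=
  L.Nodup ∧ (∀ F, F ∈ L ↔ (isFacet Δ F ∧ F ∉ Sg)) ∧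
    ∀ i < L.length, ∃ R, IsRelRestriction Sg L i R

/-- The facet of the `(d+1)`-simplex on `{0,…,d+1}` omitting vertex `i`. -/
def Gface (d i : ℕ) : Finset (V d) :=
  ((Finset.range (d+2)).filter (fun j => j ≠ i)).image (origV d)

def GammaC (d i : ℕ) : Set (Finset (V d)) := simplexOn (Gface d i)

def GammaU (d : ℕ) (I : Finset ℕ) : Set (Finset (V d)) := {F | ∃ i ∈ I, F ⊆ Gface d i}

/-- The face `F_i = {i+1,…,d+1}` subdivided by the diamond operation. -/
def Fsub (d i : ℕ) : Finset (V d) := (Finset.Ioc i (d+1)).image (origV d)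

/-- The diamond operation: successive stellar subdivisions at `F_0, F_1, …, F_d`
with new vertices `v_0,…,v_d` (subdivision at a non-face has no effect). -/
def Diam (d : ℕ) (Δ : Set (Finset (V d))) : Set (Finset (V d)) :=
  (List.range (d+1)).foldl (fun Γ i => sdC (newV d i) (Fsub d i) Γ) Δ

def DiamU (d : ℕ) (I : Finset ℕ) : Set (Finset (V d)) := Diam d (GammaU d I)

/-- Boundary complex of the cross-polytope on the vertex pairs `{j, v_j}`, `j ∈ S`. -/
def crossN (d : ℕ) (S : Finset ℕ) : Set (Finset (V d)) :=
  {F | (∀ x ∈ F, ∃ j ∈ S, x = origV d j ∨ x = newV d j) ∧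
       ∀ j ∈ S, ¬ (origV d j ∈ F ∧ newV d j ∈ F)}

/-- Boundary complex: generated by the faces of cardinality `n` contained in
exactly one facet. -/
def bdryC (n : ℕ) (Δ : Set (Finset W)) : Set (Finset W) :=
  {G | ∃ F, G ⊆ F ∧ F ∈ Δ ∧ F.card = n ∧ ∃! H, isFacet Δ H ∧ F ⊆ H}

/-- Positions in `P` at which `G` differs from the reference facet `F0`. -/
def diffSet (d : ℕ) (P : Finset ℕ) (F0 G : Finset (V d)) : Finset ℕ :=
  P.filter (fun j => decide (origV d j ∈ G) ≠ decide (origV d j ∈ F0))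

/-- Degree lexicographic comparison of characteristic (difference) sets. -/
def dlexLT (D D' : Finset ℕ) : Prop :=
  D.card < D'.card ∨
    (D.card = D'.card ∧ ∃ m, m ∉ D ∧ m ∈ D' ∧ ∀ j < m, (j ∈ D ↔ j ∈ D'))

/-- `L` lists the facets of `Δ` in degree lexicographic order w.r.t. `F0`. -/
def IsDegLexOrder (d : ℕ) (P : Finset ℕ) (Δ : Set (Finset (V d)))
    (F0 : Finset (V d)) (L : List (Finset (V d))) : Prop :=
  L.Nodup ∧ (∀ F, F ∈ L ↔ isFacet Δ F) ∧
    L.Pairwise (fun G G' => dlexLT (diffSet d P F0 G) (diffSet d P F0 G'))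

/-- Vertices of `F` sitting at the positions in `D`. -/
def posVerts (d : ℕ) (F : Finset (V d)) (D : Finset ℕ) : Finset (V d) :=
  F.filter (fun x => ∃ j ∈ D, x = origV d j ∨ x = newV d j)

def IsoN (Δ Γ : Set (Finset ℕ)) : Prop :=
  ∃ e : Equiv.Perm ℕ, ∀ F : Finset ℕ, F ∈ Δ ↔ F.image (⇑e) ∈ Γ

def StellarMove (Δ Γ : Set (Finset ℕ)) : Prop :=
  ∃ (F : Finset ℕ) (v : ℕ), F ∈ Δ ∧ F ≠ ∅ ∧ (∀ G ∈ Δ, v ∉ G) ∧ Γ = sdC v F Δ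

/-- PL homeomorphism of simplicial complexes, encoded via Alexander's theorem as
stellar equivalence: the equivalence relation generated by stellar subdivisions
(and their inverses, the welds) together with simplicial isomorphisms. -/
def PLHomeo (Δ Γ : Set (Finset ℕ)) : Prop :=
  Relation.EqvGen (fun A B => StellarMove A B ∨ IsoN A B) Δ Γ

def encV (d : ℕ) : V d → ℕ := Sum.elim (fun j => 2 * j.val) (fun j => 2 * j.val + 1)

def toN (d : ℕ) (Δ : Set (Finset (V d))) : Set (Finset ℕ) := mapC (encV d) Δ

def ballN (c : ℕ) : Set (Finset ℕ) := {F | F ⊆ Finset.range c}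

def sphereN (c : ℕ) : Set (Finset ℕ) := {F | F ⊂ Finset.range (c+1)}

/-- `Δ` is a combinatorial ball of dimension `c-1` (a `(c-1)`-simplex has `c` vertices). -/
def IsCombBall (d c : ℕ) (Δ : Set (Finset (V d))) : Prop := PLHomeo (toN d Δ) (ballN c)

/-- `Δ` is a combinatorial sphere of dimension `c-1`. -/
def IsCombSphere (d c : ℕ) (Δ : Set (Finset (V d))) : Prop := PLHomeo (toN d Δ) (sphereN c)

def ConnC (Δ : Set (Finset W)) : Prop :=
  ∀ u v : W, ({u} : Finset W) ∈ Δ → ({v} : Finset W) ∈ Δ →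
    Relation.ReflTransGen (fun a b => ({a, b} : Finset W) ∈ Δ) u v

/-- Combinatorial `d`-manifold (possibly with boundary): connected, pure, and all
links of nonempty faces are combinatorial balls or spheres of dimension `d - |F|`. -/
def IsCombManifold (d : ℕ) (Δ : Set (Finset (V d))) : Prop :=
  IsComplex Δ ∧ (∅ : Finset (V d)) ∈ Δ ∧ ConnC Δ ∧
  (∀ F ∈ Δ, ∃ G, isFacet Δ G ∧ F ⊆ G ∧ G.card = d+1) ∧
  ∀ F ∈ Δ, F ≠ (∅ : Finset (V d)) →
    (IsCombBall d (d+1-F.card) (lkC Δ F) ∨ IsCombSphere d (d+1-F.card) (lkC Δ F))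

def liftV (d : ℕ) : V d → V (d+1) := Sum.map Fin.castSucc Fin.castSucc

/-- The relabeling `π : i ↦ i+1`, `v_i ↦ v_{i+1}`. -/
def piV (d : ℕ) : V d → V (d+1) := Sum.map Fin.succ Fin.succ

/-- The relabeling `ρ : i ↦ i-1`, `v_i ↦ v_{i-1}` (indices mod `d+1`). -/
def rhoV (d : ℕ) : V d → V d := fun x =>
  match x with
  | Sum.inl j => origV d ((j.val + d) % (d+1))
  | Sum.inr j => newV d ((j.val + d) % (d+1))

/-- `ψ` swaps the vertices `d` and `v_d`. -/
def psiV (d : ℕ) : V d → V d := fun x => Equiv.swap (origV d d) (newV d d) x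

def sigmaV (d : ℕ) : V d → V d := psiV d ∘ rhoV d

/-- `Δ` is (isomorphic to) the boundary complex of the `(d+1)`-dimensional
cross-polytope. -/
def IsCrossBdry (d : ℕ) (Δ : Set (Finset W)) : Prop :=
  ∃ f : Fin (d+1) × Bool → W, Function.Injective f ∧
    Δ = {F | (∀ v ∈ F, ∃ p, v = f p) ∧
             ∀ j : Fin (d+1), ¬ (f (j, true) ∈ F ∧ f (j, false) ∈ F)}

/-- `Sg` is a connected sum of `Δ` and `Γ`: they meet exactly in the full simplex
on a common facet `F`, which is removed. -/
def IsConnSum (Δ Γ Sg : Set (Finset W)) : Prop :=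
  ∃ F : Finset W, isFacet Δ F ∧ isFacet Γ F ∧ Δ ∩ Γ = simplexOn F ∧ Sg = (Δ ∪ Γ) \ {F}

/-- Connected sum of `m+1` copies of the boundary of the `(d+1)`-cross-polytope. -/
def IsCrossStacked (d : ℕ) : ℕ → Set (Finset W) → Prop
  | 0, Δ => IsCrossBdry d Δ
  | (m+1), Δ => ∃ A B : Set (Finset W), IsCrossStacked d m A ∧ IsCrossBdry d B ∧ IsConnSum A B Δ

/-- The initial facet of the block `Diam(Γ_{iℓ})` (for block index `ℓ ≥ 1`;
block `0` uses the facet `G0` meeting the boundary). -/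
def initFacet (d i1 iℓ : ℕ) (G0 : Finset (V d)) (ℓ : ℕ) : Finset (V d) :=
  if ℓ = 0 then G0
  else ((Finset.range iℓ).image (origV d)) ∪ {newV d iℓ} ∪
       ((Finset.Ioo iℓ (max i1 iℓ)).image (origV d)) ∪
       ((Finset.Icc (max i1 iℓ) d).image (newV d))


section Stmt0Aux

open Finset

variable {d : ℕ}

lemma origV_inj {a b : ℕ} (ha : a ≤ d+1) (hb : b ≤ d+1) (h : origV d a = origV d b) : a = b := by
  simp only [origV, Sum.inl.injEq, Fin.mk.injEq] at h
  rwa [Nat.mod_eq_of_lt (by omega), Nat.mod_eq_of_lt (by omega)] at h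

lemma newV_inj {a b : ℕ} (ha : a ≤ d) (hb : b ≤ d) (h : newV d a = newV d b) : a = b := by
  simp only [newV, Sum.inr.injEq, Fin.mk.injEq] at h
  rwa [Nat.mod_eq_of_lt (by omega), Nat.mod_eq_of_lt (by omega)] at h

lemma origV_ne_newV (a b : ℕ) : origV d a ≠ newV d b := by simp [origV, newV]

lemma newV_ne_origV (a b : ℕ) : newV d a ≠ origV d b := by simp [origV, newV]

lemma mem_O {S : Finset ℕ} (hS : ∀ j ∈ S, j ≤ d+1) {a : ℕ} (ha : a ≤ d+1) :
    origV d a ∈ S.image (origV d) ↔ a ∈ S := by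
  simp only [Finset.mem_image]
  constructor
  · rintro ⟨j, hj, h⟩; rwa [← origV_inj (hS j hj) ha h]
  · exact fun h => ⟨a, h, rfl⟩

lemma mem_Nw {S : Finset ℕ} (hS : ∀ j ∈ S, j ≤ d) {a : ℕ} (ha : a ≤ d) :
    newV d a ∈ S.image (newV d) ↔ a ∈ S := by
  simp only [Finset.mem_image]
  constructor
  · rintro ⟨j, hj, h⟩; rwa [← newV_inj (hS j hj) ha h]
  · exact fun h => ⟨a, h, rfl⟩

lemma newV_notin_O {S : Finset ℕ} {a : ℕ} : newV d a ∉ S.image (origV d) := by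
  simp only [Finset.mem_image]
  rintro ⟨j, _, h⟩
  exact origV_ne_newV j a h

lemma origV_notin_Nw {S : Finset ℕ} {a : ℕ} : origV d a ∉ S.image (newV d) := by
  simp only [Finset.mem_image]
  rintro ⟨j, _, h⟩
  exact newV_ne_origV j a h

lemma mem_sdC {W : Type*} [DecidableEq W] {v : W} {F s : Finset W} {Δ : Set (Finset W)} :
    s ∈ sdC v F Δ ↔ (s ∈ Δ ∧ ¬ F ⊆ s) ∨
      (∃ b c, b ⊂ F ∧ Disjoint F c ∧ F ∪ c ∈ Δ ∧ (s = b ∪ c ∨ s = insert v (b ∪ c))) := by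
  simp only [sdC, delFace, joinC, simplexOn, bdrySimplex, lkC, Set.mem_union, Set.mem_setOf_eq]
  constructor
  · rintro (⟨h1, h2⟩ | ⟨a, ha, t, ⟨b, hb, c, ⟨hc1, hc2⟩, rfl⟩, rfl⟩)
    · exact Or.inl ⟨h1, h2⟩
    · refine Or.inr ⟨b, c, hb, hc1, hc2, ?_⟩
      rcases Finset.subset_singleton_iff.mp ha with rfl | rfl
      · left; simp
      · right; rw [Finset.insert_eq]
  · rintro (⟨h1, h2⟩ | ⟨b, c, hb, hc1, hc2, (rfl | rfl)⟩)
    · exact Or.inl ⟨h1, h2⟩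
    · exact Or.inr ⟨∅, by simp, b ∪ c, ⟨b, hb, c, ⟨hc1, hc2⟩, rfl⟩, by simp⟩
    · exact Or.inr ⟨{v}, by simp, b ∪ c, ⟨b, hb, c, ⟨hc1, hc2⟩, rfl⟩, by rw [Finset.insert_eq]⟩

lemma sdC_nonface {W : Type*} [DecidableEq W] {v : W} {F : Finset W} {Δ : Set (Finset W)}
    (h : ∀ G ∈ Δ, ¬ F ⊆ G) : sdC v F Δ = Δ := by
  ext s
  rw [mem_sdC]
  constructor
  · rintro (⟨h1, _⟩ | ⟨b, c, _, _, hm, _⟩)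
    · exact h1
    · exact absurd Finset.subset_union_left (h _ hm)
  · intro hs
    exact Or.inl ⟨hs, h s hs⟩

lemma decompG {W : Type*} [DecidableEq W] {v : W} {F G : Finset W} (hv : v ∈ G) :
    G = insert v ((G ∩ F) ∪ (G \ insert v F)) := by
  ext x
  simp only [Finset.mem_insert, Finset.mem_union, Finset.mem_inter, Finset.mem_sdiff]
  constructor
  · intro hx
    by_cases h1 : x = v
    · exact Or.inl h1
    by_cases h2 : x ∈ F
    · exact Or.inr (Or.inl ⟨hx, h2⟩)
    · exact Or.inr (Or.inr ⟨hx, by simp [h1, h2]⟩)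
  · rintro (rfl | ⟨h, _⟩ | ⟨h, _⟩) <;> first | exact hv | exact h

lemma Ioc_eq_Icc_succ (k n : ℕ) : Finset.Ioc k n = Finset.Icc (k+1) n := by
  ext x; simp only [Finset.mem_Ioc, Finset.mem_Icc]; omega

lemma Icc_eq_insert_Ioc {k n : ℕ} (h : k ≤ n) : Finset.Icc k n = insert k (Finset.Ioc k n) := by
  ext x; simp only [Finset.mem_Icc, Finset.mem_insert, Finset.mem_Ioc]; omega

/-- The intermediate complex after the diamond steps `i, i+1, …, k-1` applied to `Γ_i`. -/
def Dc (d i k : ℕ) : Set (Finset (V d)) :=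
  {G | G ⊆ ((Finset.range i).image (origV d) ∪ {newV d i} ∪
        (Finset.Ioc i (d+1)).image (origV d) ∪ (Finset.Ioc i (k-1)).image (newV d))
      ∧ (∀ j ∈ Finset.Ioc i (k-1), ¬(origV d j ∈ G ∧ newV d j ∈ G))
      ∧ ¬ ((Finset.Icc k (d+1)).image (origV d) ⊆ G)}

lemma base_sd {i : ℕ} (hi : i ≤ d) :
    sdC (newV d i) (Fsub d i) (GammaC d i) = Dc d i (i+1) := by
  have hIcc : (Finset.Icc (i+1) (d+1)).image (origV d) = Fsub d i := by
    rw [Fsub, Ioc_eq_Icc_succ]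
  have hii : i + 1 - 1 = i := by omega
  have h1 : (Finset.range i).image (origV d) ⊆ Gface d i := by
    apply Finset.image_subset_image
    intro j hj
    have := Finset.mem_range.mp hj
    simp only [Finset.mem_filter, Finset.mem_range]
    omega
  have h2 : (Finset.Ioc i (d+1)).image (origV d) ⊆ Gface d i := by
    apply Finset.image_subset_image
    intro j hj
    rcases Finset.mem_Ioc.mp hj with ⟨hj1, hj2⟩
    simp only [Finset.mem_filter, Finset.mem_range]
    omega
  have hFG : Fsub d i ⊆ Gface d i := h2
  have hGamb : Gface d i ⊆ (Finset.range i).image (origV d) ∪ {newV d i} ∪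
      (Finset.Ioc i (d+1)).image (origV d) := by
    intro x hx
    obtain ⟨m, hm, rfl⟩ := Finset.mem_image.mp hx
    rcases Finset.mem_filter.mp hm with ⟨hm1, hm2⟩
    have hmr := Finset.mem_range.mp hm1
    by_cases hmi : m < i
    · exact Finset.mem_union_left _ (Finset.mem_union_left _
        (Finset.mem_image_of_mem _ (Finset.mem_range.mpr hmi)))
    · exact Finset.mem_union_right _
        (Finset.mem_image_of_mem _ (Finset.mem_Ioc.mpr ⟨by omega, by omega⟩))
  have hvnotF : ∀ x ∈ Gface d i, x ≠ newV d i := by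
    intro x hx
    obtain ⟨m, _, rfl⟩ := Finset.mem_image.mp hx
    exact origV_ne_newV m i
  ext G
  rw [mem_sdC]
  simp only [Dc, GammaC, simplexOn, Set.mem_setOf_eq, hii, hIcc, Finset.Ioc_self,
    Finset.image_empty, Finset.union_empty, Finset.notMem_empty, false_implies,
    implies_true, true_and]
  constructor
  · rintro (⟨hsubG, hF⟩ | ⟨b, c, hbF, hdisj, hFC, hGeq⟩)
    · exact ⟨hsubG.trans hGamb, hF⟩
    · have hcG : c ⊆ Gface d i := Finset.subset_union_right.trans hFC
      constructor
      · have hbc : b ∪ c ⊆ _ :=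
          Finset.union_subset ((hbF.subset.trans hFG).trans hGamb) (hcG.trans hGamb)
        rcases hGeq with rfl | rfl
        · exact hbc
        · exact Finset.insert_subset (Finset.mem_union_left _
            (Finset.mem_union_right _ (Finset.mem_singleton_self _))) hbc
      · intro hcon
        apply hbF.ne
        apply Finset.Subset.antisymm hbF.subset
        intro x hx
        have hxG := hcon hx
        have hxnc : x ∉ c := Finset.disjoint_left.mp hdisj hx
        have hxnv : x ≠ newV d i := hvnotF x (hFG hx)
        rcases hGeq with rfl | rfl
        · rcases Finset.mem_union.mp hxG with h | h
          exacts [h, absurd h hxnc]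
        · rcases Finset.mem_insert.mp hxG with h | h
          · exact absurd h hxnv
          · rcases Finset.mem_union.mp h with h | h
            exacts [h, absurd h hxnc]
  · rintro ⟨hsubG, hF⟩
    have hGm : ∀ x ∈ G, x ≠ newV d i → x ∈ Gface d i := by
      intro x hx hxv
      rcases Finset.mem_union.mp (hsubG hx) with h | h
      · rcases Finset.mem_union.mp h with h' | h'
        · exact h1 h'
        · exact absurd (Finset.mem_singleton.mp h') hxv
      · exact h2 h
    by_cases hv : newV d i ∈ G
    · right
      refine ⟨G ∩ Fsub d i, G \ insert (newV d i) (Fsub d i), ?_, ?_, ?_,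
        Or.inr (decompG hv)⟩
      · refine Finset.ssubset_iff_subset_ne.mpr ⟨Finset.inter_subset_right, ?_⟩
        intro he
        exact hF (by rw [← he]; exact Finset.inter_subset_left)
      · refine Finset.disjoint_left.mpr ?_
        intro x hx hx'
        exact (Finset.mem_sdiff.mp hx').2 (Finset.mem_insert_of_mem hx)
      · apply Finset.union_subset hFG
        intro x hx
        obtain ⟨hxG, hxni⟩ := Finset.mem_sdiff.mp hx
        exact hGm x hxG (fun he => hxni (he ▸ Finset.mem_insert_self _ _))
    · left
      exact ⟨fun x hx => hGm x hx (fun he => hv (he ▸ hx)), hF⟩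

lemma step_sd {i k : ℕ} (hik : i < k) (hk : k ≤ d) :
    sdC (newV d k) (Fsub d k) (Dc d i k) = Dc d i (k+1) := by
  have hsub1 : ∀ j ∈ Finset.Ioc k (d+1), j ≤ d+1 := fun j hj => (Finset.mem_Ioc.mp hj).2
  have hsub3 : ∀ j ∈ Finset.Ioc i (k-1), j ≤ d := fun j hj => by
    have := Finset.mem_Ioc.mp hj; omega
  have hsub4 : ∀ j ∈ Finset.Ioc i k, j ≤ d := fun j hj => by
    have := Finset.mem_Ioc.mp hj; omega
  have hIcc : (Finset.Icc (k+1) (d+1)).image (origV d) = Fsub d k := by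
    rw [Fsub, Ioc_eq_Icc_succ]
  have hIcck : (Finset.Icc k (d+1)).image (origV d) = insert (origV d k) (Fsub d k) := by
    rw [Fsub, Icc_eq_insert_Ioc (by omega), Finset.image_insert]
  have hkk1 : k + 1 - 1 = k := by omega
  have hvnotamb : newV d k ∉ (Finset.range i).image (origV d) ∪ {newV d i} ∪
      (Finset.Ioc i (d+1)).image (origV d) ∪ (Finset.Ioc i (k-1)).image (newV d) := by
    simp only [Finset.mem_union, Finset.mem_singleton]
    rintro (((h | h) | h) | h)
    · exact newV_notin_O h
    · exact hik.ne' (newV_inj hk (by omega) h)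
    · exact newV_notin_O h
    · have := Finset.mem_Ioc.mp ((mem_Nw hsub3 hk).mp h); omega
  have hambmono : (Finset.range i).image (origV d) ∪ {newV d i} ∪
      (Finset.Ioc i (d+1)).image (origV d) ∪ (Finset.Ioc i (k-1)).image (newV d) ⊆
      (Finset.range i).image (origV d) ∪ {newV d i} ∪
      (Finset.Ioc i (d+1)).image (origV d) ∪ (Finset.Ioc i k).image (newV d) :=
    Finset.union_subset_union_right
      (Finset.image_subset_image (Finset.Ioc_subset_Ioc le_rfl (by omega)))
  have hFamb : Fsub d k ⊆ (Finset.range i).image (origV d) ∪ {newV d i} ∪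
      (Finset.Ioc i (d+1)).image (origV d) ∪ (Finset.Ioc i (k-1)).image (newV d) := by
    intro x hx
    exact Finset.mem_union_left _ (Finset.mem_union_right _
      (Finset.image_subset_image (Finset.Ioc_subset_Ioc (by omega) le_rfl) hx))
  have hFamb1 : Fsub d k ⊆ (Finset.range i).image (origV d) ∪ {newV d i} ∪
      (Finset.Ioc i (d+1)).image (origV d) ∪ (Finset.Ioc i k).image (newV d) := by
    intro x hx
    exact Finset.mem_union_left _ (Finset.mem_union_right _
      (Finset.image_subset_image (Finset.Ioc_subset_Ioc (by omega) le_rfl) hx))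
  have hvamb : newV d k ∈ (Finset.range i).image (origV d) ∪ {newV d i} ∪
      (Finset.Ioc i (d+1)).image (origV d) ∪ (Finset.Ioc i k).image (newV d) :=
    Finset.mem_union_right _
      ((mem_Nw hsub4 hk).mpr (Finset.mem_Ioc.mpr ⟨hik, le_refl k⟩))
  ext G
  rw [mem_sdC]
  simp only [Dc, Set.mem_setOf_eq, hkk1, hIcc, hIcck]
  constructor
  · rintro (⟨⟨hsubG, hpair, _⟩, hF⟩ | ⟨b, c, hbF, hdisj, ⟨hsubFC, hpairFC, hfullFC⟩, hGeq⟩)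
    · refine ⟨hsubG.trans hambmono, ?_, hF⟩
      intro j hj
      rintro ⟨ho, hn⟩
      rcases Finset.mem_Ioc.mp hj with ⟨hj1, hj2⟩
      by_cases hjk : j = k
      · subst hjk; exact hvnotamb (hsubG hn)
      · exact hpair j (Finset.mem_Ioc.mpr ⟨hj1, by omega⟩) ⟨ho, hn⟩
    · have hcamb := Finset.subset_union_right.trans hsubFC
      refine ⟨?_, ?_, ?_⟩
      · have hbc : b ∪ c ⊆ _ :=
          Finset.union_subset (hbF.subset.trans hFamb1) (hcamb.trans hambmono)
        rcases hGeq with rfl | rfl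
        · exact hbc
        · exact Finset.insert_subset hvamb hbc
      · intro j hj
        rintro ⟨ho, hn⟩
        rcases Finset.mem_Ioc.mp hj with ⟨hj1, hj2⟩
        have honotb : origV d j ∉ b := fun hb' => by
          have := Finset.mem_Ioc.mp ((mem_O hsub1 (by omega)).mp (hbF.subset hb'))
          omega
        have hoc : origV d j ∈ c := by
          rcases hGeq with rfl | rfl
          · rcases Finset.mem_union.mp ho with h | h
            exacts [absurd h honotb, h]
          · rcases Finset.mem_insert.mp ho with h | h
            · exact absurd h (origV_ne_newV j k)
            · rcases Finset.mem_union.mp h with h | h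
              exacts [absurd h honotb, h]
        by_cases hjk : j = k
        · subst hjk
          exact hfullFC (Finset.insert_subset (Finset.mem_union_right _ hoc)
            Finset.subset_union_left)
        · have hnnotb : newV d j ∉ b := fun hb' => newV_notin_O (hbF.subset hb')
          have hnc : newV d j ∈ c := by
            rcases hGeq with rfl | rfl
            · rcases Finset.mem_union.mp hn with h | h
              exacts [absurd h hnnotb, h]
            · rcases Finset.mem_insert.mp hn with h | h
              · exact absurd (newV_inj (by omega) hk h) hjk
              · rcases Finset.mem_union.mp h with h | h
                exacts [absurd h hnnotb, h]
          exact hpairFC j (Finset.mem_Ioc.mpr ⟨hj1, by omega⟩)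
            ⟨Finset.mem_union_right _ hoc, Finset.mem_union_right _ hnc⟩
      · intro hcon
        apply hbF.ne
        apply Finset.Subset.antisymm hbF.subset
        intro x hx
        have hxG := hcon hx
        obtain ⟨j, hj, rfl⟩ := Finset.mem_image.mp hx
        have hxnc : origV d j ∉ c := Finset.disjoint_left.mp hdisj hx
        rcases hGeq with rfl | rfl
        · rcases Finset.mem_union.mp hxG with h | h
          exacts [h, absurd h hxnc]
        · rcases Finset.mem_insert.mp hxG with h | h
          · exact absurd h (origV_ne_newV j k)
          · rcases Finset.mem_union.mp h with h | h
            exacts [h, absurd h hxnc]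
  · rintro ⟨hsubG, hpair, hF⟩
    by_cases hv : newV d k ∈ G
    · right
      refine ⟨G ∩ Fsub d k, G \ insert (newV d k) (Fsub d k), ?_, ?_, ⟨?_, ?_, ?_⟩,
        Or.inr (decompG hv)⟩
      · refine Finset.ssubset_iff_subset_ne.mpr ⟨Finset.inter_subset_right, ?_⟩
        intro he
        exact hF (by rw [← he]; exact Finset.inter_subset_left)
      · refine Finset.disjoint_left.mpr ?_
        intro x hx hx'
        exact (Finset.mem_sdiff.mp hx').2 (Finset.mem_insert_of_mem hx)
      · apply Finset.union_subset hFamb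
        intro x hx
        obtain ⟨hxG, hxni⟩ := Finset.mem_sdiff.mp hx
        rcases Finset.mem_union.mp (hsubG hxG) with h | h
        · exact Finset.mem_union_left _ h
        · obtain ⟨j, hj, rfl⟩ := Finset.mem_image.mp h
          rcases Finset.mem_Ioc.mp hj with ⟨hj1, hj2⟩
          by_cases hjk : j = k
          · subst hjk; exact absurd (Finset.mem_insert_self _ _) hxni
          · exact Finset.mem_union_right _
              (Finset.mem_image_of_mem _ (Finset.mem_Ioc.mpr ⟨hj1, by omega⟩))
      · intro j hj
        rintro ⟨ho, hn⟩
        rcases Finset.mem_Ioc.mp hj with ⟨hj1, hj2⟩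
        have hoG : origV d j ∈ G := by
          rcases Finset.mem_union.mp ho with h | h
          · have := Finset.mem_Ioc.mp ((mem_O hsub1 (by omega)).mp h); omega
          · exact (Finset.mem_sdiff.mp h).1
        have hnG : newV d j ∈ G := by
          rcases Finset.mem_union.mp hn with h | h
          · exact absurd h newV_notin_O
          · exact (Finset.mem_sdiff.mp h).1
        exact hpair j (Finset.mem_Ioc.mpr ⟨hj1, by omega⟩) ⟨hoG, hnG⟩
      · intro hcon
        have hk' := hcon (Finset.mem_insert_self _ _)
        rcases Finset.mem_union.mp hk' with h | h
        · have := Finset.mem_Ioc.mp ((mem_O hsub1 (by omega)).mp h); omega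
        · exact hpair k (Finset.mem_Ioc.mpr ⟨hik, le_refl k⟩)
            ⟨(Finset.mem_sdiff.mp h).1, hv⟩
    · left
      refine ⟨⟨?_, ?_, ?_⟩, hF⟩
      · intro x hx
        rcases Finset.mem_union.mp (hsubG hx) with h | h
        · exact Finset.mem_union_left _ h
        · obtain ⟨j, hj, rfl⟩ := Finset.mem_image.mp h
          rcases Finset.mem_Ioc.mp hj with ⟨hj1, hj2⟩
          by_cases hjk : j = k
          · subst hjk; exact absurd hx hv
          · exact Finset.mem_union_right _
              (Finset.mem_image_of_mem _ (Finset.mem_Ioc.mpr ⟨hj1, by omega⟩))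
      · intro j hj hpp
        rcases Finset.mem_Ioc.mp hj with ⟨hj1, hj2⟩
        exact hpair j (Finset.mem_Ioc.mpr ⟨hj1, by omega⟩) hpp
      · intro hcon
        exact hF ((Finset.subset_insert _ _).trans hcon)

lemma final_eq {i : ℕ} (hi : i ≤ d) :
    Dc d i (d+1) =
      joinC (simplexOn (((Finset.range i).image (origV d)) ∪ {newV d i}))
        (crossN d (Finset.Ioc i d)) := by
  have hIcc : (Finset.Icc (d+1) (d+1)).image (origV d) = {origV d (d+1)} := by
    rw [Finset.Icc_self, Finset.image_singleton]
  have hdd : d + 1 - 1 = d := by omega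
  have hBamb : (Finset.range i).image (origV d) ∪ {newV d i} ⊆
      (Finset.range i).image (origV d) ∪ {newV d i} ∪
      (Finset.Ioc i (d+1)).image (origV d) ∪ (Finset.Ioc i d).image (newV d) :=
    fun x hx => Finset.mem_union_left _ (Finset.mem_union_left _ hx)
  have hoB : ∀ j : ℕ, i < j → j ≤ d+1 →
      origV d j ∉ (Finset.range i).image (origV d) ∪ {newV d i} := by
    intro j hj hjd
    simp only [Finset.mem_union, Finset.mem_singleton]
    rintro (h | h)
    · obtain ⟨m, hm, hme⟩ := Finset.mem_image.mp h
      have hmr := Finset.mem_range.mp hm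
      have := origV_inj (d := d) (by omega) hjd hme
      omega
    · exact origV_ne_newV j i h
  ext G
  simp only [Dc, joinC, simplexOn, crossN, Set.mem_setOf_eq, hIcc, hdd,
    Finset.singleton_subset_iff]
  constructor
  · rintro ⟨hsub, hpair, hlast⟩
    refine ⟨G ∩ ((Finset.range i).image (origV d) ∪ {newV d i}),
      Finset.inter_subset_right,
      G \ ((Finset.range i).image (origV d) ∪ {newV d i}), ⟨?_, ?_⟩,
      (by ext x
          simp only [Finset.mem_union, Finset.mem_inter, Finset.mem_sdiff]
          tauto)⟩
    · intro x hx
      obtain ⟨hxG, hxB⟩ := Finset.mem_sdiff.mp hx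
      rcases Finset.mem_union.mp (hsub hxG) with h | h
      · rcases Finset.mem_union.mp h with h' | h'
        · exact absurd h' hxB
        · obtain ⟨j, hj, rfl⟩ := Finset.mem_image.mp h'
          rcases Finset.mem_Ioc.mp hj with ⟨hj1, hj2⟩
          have hjd : j ≠ d+1 := by
            intro he; subst he; exact hlast hxG
          exact ⟨j, Finset.mem_Ioc.mpr ⟨hj1, by omega⟩, Or.inl rfl⟩
      · obtain ⟨j, hj, rfl⟩ := Finset.mem_image.mp h
        exact ⟨j, hj, Or.inr rfl⟩
    · intro j hj
      rintro ⟨ho, hn⟩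
      exact hpair j hj ⟨(Finset.mem_sdiff.mp ho).1, (Finset.mem_sdiff.mp hn).1⟩
  · rintro ⟨a, ha, b, ⟨hbv, hbp⟩, rfl⟩
    have haG : ∀ x ∈ a, x ∈ (Finset.range i).image (origV d) ∪ {newV d i} :=
      fun x hx => ha hx
    refine ⟨?_, ?_, ?_⟩
    · apply Finset.union_subset (ha.trans hBamb)
      intro x hx
      obtain ⟨j, hj, hor⟩ := hbv x hx
      rcases Finset.mem_Ioc.mp hj with ⟨hj1, hj2⟩
      rcases hor with rfl | rfl
      · exact Finset.mem_union_left _ (Finset.mem_union_right _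
          (Finset.mem_image_of_mem _ (Finset.mem_Ioc.mpr ⟨hj1, by omega⟩)))
      · exact Finset.mem_union_right _ (Finset.mem_image_of_mem _ hj)
    · intro j hj
      rintro ⟨ho, hn⟩
      rcases Finset.mem_Ioc.mp hj with ⟨hj1, hj2⟩
      have hna : newV d j ∉ a := by
        intro h
        rcases Finset.mem_union.mp (haG _ h) with h' | h'
        · exact newV_notin_O h'
        · have := newV_inj (by omega) (by omega) (Finset.mem_singleton.mp h')
          omega
      have hoa : origV d j ∉ a := fun h => hoB j hj1 (by omega) (haG _ h)
      have hob : origV d j ∈ b := by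
        rcases Finset.mem_union.mp ho with h | h
        exacts [absurd h hoa, h]
      have hnb : newV d j ∈ b := by
        rcases Finset.mem_union.mp hn with h | h
        exacts [absurd h hna, h]
      exact hbp j hj ⟨hob, hnb⟩
    · intro hcon
      rcases Finset.mem_union.mp hcon with h | h
      · exact hoB (d+1) (by omega) (by omega) (haG _ h)
      · obtain ⟨j, hj, hor⟩ := hbv _ h
        rcases Finset.mem_Ioc.mp hj with ⟨hj1, hj2⟩
        rcases hor with heq | heq
        · have := origV_inj (by omega) (by omega) heq
          omega
        · exact origV_ne_newV (d+1) j heq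

lemma foldl_const {α β : Type*} (f : β → α → β) (b : β) (l : List α)
    (h : ∀ a ∈ l, f b a = b) : l.foldl f b = b := by
  induction l with
  | nil => rfl
  | cons x xs ih =>
      rw [List.foldl_cons, h x (by simp)]
      exact ih fun a ha => h a (by simp [ha])

lemma skip_nonface {i j : ℕ} (hj : j < i) (hi : i ≤ d+1) :
    ∀ G ∈ GammaC d i, ¬ Fsub d j ⊆ G := by
  intro G hG hF
  simp only [GammaC, simplexOn, Set.mem_setOf_eq] at hG
  have hmem : origV d i ∈ Fsub d j :=
    Finset.mem_image_of_mem _ (by simp only [Finset.mem_Ioc]; omega)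
  have : origV d i ∈ Gface d i := hG (hF hmem)
  simp only [Gface, Finset.mem_image, Finset.mem_filter, Finset.mem_range] at this
  obtain ⟨m, ⟨hm2, hmne⟩, heq⟩ := this
  exact hmne (origV_inj (by omega) hi heq)

lemma diam_gamma (i : ℕ) (hi : i ≤ d) :
    Diam d (GammaC d i) = Dc d i (d+1) := by
  have htail : ∀ m, 1 ≤ m → i + m ≤ d+1 →
      ((List.range m).map (i + ·)).foldl (fun Γ j => sdC (newV d j) (Fsub d j) Γ)
        (GammaC d i) = Dc d i (i+m) := by
    intro m
    induction m with
    | zero => intro h; exact absurd h (by omega)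
    | succ m ih =>
      intro _ hle
      by_cases hm : m = 0
      · subst hm
        have hr1 : List.range 1 = [0] := rfl
        simp only [hr1, List.map_cons, List.map_nil, List.foldl_cons, List.foldl_nil]
        simpa using base_sd hi
      · rw [List.range_succ, List.map_append, List.foldl_append, ih (by omega) (by omega)]
        simp only [List.map_cons, List.map_nil, List.foldl_cons, List.foldl_nil]
        have h1 : i + (m+1) = (i + m) + 1 := by omega
        rw [h1]
        exact step_sd (by omega) (by omega)
  have hsplit : List.range (d+1) = List.range i ++ (List.range (d+1-i)).map (i + ·) := by
    have h : d + 1 = i + (d+1-i) := by omega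
    conv_lhs => rw [h, List.range_add]
  unfold Diam
  rw [hsplit, List.foldl_append,
    foldl_const _ _ _ (fun a ha => sdC_nonface (skip_nonface (List.mem_range.mp ha) (by omega))),
    htail (d+1-i) (by omega) (by omega)]
  have h2 : i + (d+1-i) = d+1 := by omega
  rw [h2]

end Stmt0Aux

/-- description of the diamond complexes of the facets of the simplex. -/
theorem stmt0 (d i : ℕ) :
    (i ≤ d →
      Diam d (GammaC d i) =
        joinC (simplexOn (((Finset.range i).image (origV d)) ∪ {newV d i}))
          (crossN d (Finset.Ioc i d))) ∧
    Diam d (GammaC d (d+1)) = simplexOn ((Finset.range (d+1)).image (origV d)) := by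
  constructor
  · intro hi
    rw [diam_gamma i hi, final_eq hi]
  · have h2 : Diam d (GammaC d (d+1)) = GammaC d (d+1) := by
      unfold Diam
      apply foldl_const
      intro a ha
      exact sdC_nonface (skip_nonface (List.mem_range.mp ha) le_rfl)
    rw [h2]
    have hG : Gface d (d+1) = (Finset.range (d+1)).image (origV d) := by
      unfold Gface
      congr 1
      ext x
      simp only [Finset.mem_filter, Finset.mem_range]
      omega
    rw [GammaC, hG]

end Paper
end

section
/- Let $0\le k\le d$. Then the simplicial complexes $\Diamond(\Gamma_k)$ and $\bigcup_{i=k+1}^{d+1}\Diamond(\Gamma_i)$ are isomorphic, via the map switching the vertices $k$ and $v_k$ and fixing all other vertices. -/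
namespace Paper

variable {W : Type*} [DecidableEq W] {W' : Type*} [DecidableEq W']

/-! ### Auxiliary development for Statement 4 -/

section Stmt4Aux

variable {d : ℕ}

lemma aux_origV_eq {j : ℕ} (hj : j < d+2) : origV d j = Sum.inl ⟨j, hj⟩ := by
  simp [origV, Nat.mod_eq_of_lt hj]

lemma aux_newV_eq {j : ℕ} (hj : j < d+1) : newV d j = Sum.inr ⟨j, hj⟩ := by
  simp [newV, Nat.mod_eq_of_lt hj]

lemma aux_origV_ne_newV (i j : ℕ) : origV d i ≠ newV d j := by
  simp [origV, newV]

lemma aux_origV_inj {i j : ℕ} (hi : i ≤ d+1) (hj : j ≤ d+1) :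
    origV d i = origV d j ↔ i = j := by
  rw [aux_origV_eq (by omega), aux_origV_eq (by omega)]
  constructor
  · intro h
    simpa [Fin.ext_iff] using h
  · rintro rfl; rfl

lemma aux_newV_inj {i j : ℕ} (hi : i ≤ d) (hj : j ≤ d) :
    newV d i = newV d j ↔ i = j := by
  rw [aux_newV_eq (by omega), aux_newV_eq (by omega)]
  constructor
  · intro h
    simpa [Fin.ext_iff] using h
  · rintro rfl; rfl

lemma aux_V_cases (x : V d) :
    (∃ j, j ≤ d+1 ∧ x = origV d j) ∨ (∃ j, j ≤ d ∧ x = newV d j) := by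
  cases x with
  | inl a => exact Or.inl ⟨a.val, by omega, (aux_origV_eq a.isLt).symm⟩
  | inr a => exact Or.inr ⟨a.val, by omega, (aux_newV_eq a.isLt).symm⟩

lemma aux_mem_Fsub {x : V d} {t : ℕ} :
    x ∈ Fsub d t ↔ ∃ m, t < m ∧ m ≤ d+1 ∧ x = origV d m := by
  unfold Fsub
  simp only [Finset.mem_image, Finset.mem_Ioc]
  constructor
  · rintro ⟨a, ⟨h1, h2⟩, rfl⟩; exact ⟨a, h1, h2, rfl⟩
  · rintro ⟨m, h1, h2, rfl⟩; exact ⟨m, ⟨h1, h2⟩, rfl⟩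

lemma aux_origV_mem_Fsub {j t : ℕ} (hj : j ≤ d+1) : origV d j ∈ Fsub d t ↔ t < j := by
  rw [aux_mem_Fsub]
  constructor
  · rintro ⟨m, h1, h2, he⟩
    rw [aux_origV_inj hj h2] at he; omega
  · intro h; exact ⟨j, h, hj, rfl⟩

lemma aux_newV_not_mem_Fsub {j t : ℕ} : newV d j ∉ Fsub d t := by
  rw [aux_mem_Fsub]
  rintro ⟨m, _, _, he⟩
  exact aux_origV_ne_newV m j he.symm

lemma aux_Fsub_subset_iff {t : ℕ} {F : Finset (V d)} :
    Fsub d t ⊆ F ↔ ∀ m, t < m → m ≤ d+1 → origV d m ∈ F := by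
  constructor
  · intro h m h1 h2; exact h (aux_mem_Fsub.mpr ⟨m, h1, h2, rfl⟩)
  · intro h x hx
    obtain ⟨m, h1, h2, rfl⟩ := aux_mem_Fsub.mp hx
    exact h m h1 h2

lemma aux_mem_Gface {x : V d} {i : ℕ} :
    x ∈ Gface d i ↔ ∃ j, j ≤ d+1 ∧ j ≠ i ∧ x = origV d j := by
  unfold Gface
  simp only [Finset.mem_image, Finset.mem_filter, Finset.mem_range]
  constructor
  · rintro ⟨a, ⟨h1, h2⟩, rfl⟩; exact ⟨a, by omega, h2, rfl⟩
  · rintro ⟨j, h1, h2, rfl⟩; exact ⟨j, ⟨by omega, h2⟩, rfl⟩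

lemma aux_mem_GammaC {i : ℕ} (hi : i ≤ d+1) {F : Finset (V d)} :
    F ∈ GammaC d i ↔ (origV d i ∉ F ∧ ∀ j, j ≤ d → newV d j ∉ F) := by
  constructor
  · intro hF
    have hsub : F ⊆ Gface d i := hF
    constructor
    · intro h
      obtain ⟨j, hj, hne, he⟩ := aux_mem_Gface.mp (hsub h)
      exact hne ((aux_origV_inj hi hj).mp he).symm
    · intro j hj h
      obtain ⟨m, _, _, he⟩ := aux_mem_Gface.mp (hsub h)
      exact aux_origV_ne_newV m j he.symm
  · rintro ⟨h1, h2⟩ x hx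
    rcases aux_V_cases x with ⟨j, hj, rfl⟩ | ⟨j, hj, rfl⟩
    · exact aux_mem_Gface.mpr ⟨j, hj, fun he => h1 (((aux_origV_inj hj hi).mpr he) ▸ hx), rfl⟩
    · exact absurd hx (h2 j hj)

lemma aux_GammaC_closed {i : ℕ} : ∀ F ∈ GammaC d i, ∀ G, G ⊆ F → G ∈ GammaC d i := by
  intro F hF G hG
  exact hG.trans hF

/-- The invariant describing the complex after `t` subdivision steps
(valid for `i < t ≤ d+1`), expressed on atoms. -/
def InvP (d i t : ℕ) (o n : ℕ → Prop) : Prop :=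
  ¬ o i ∧ (∀ j, j < i → ¬ n j) ∧ (∀ j, t ≤ j → j ≤ d → ¬ n j) ∧
    (∀ j, i < j → j < t → ¬ (o j ∧ n j)) ∧ ∃ m, t ≤ m ∧ m ≤ d+1 ∧ ¬ o m

def Inv (d i t : ℕ) : Set (Finset (V d)) :=
  {F | InvP d i t (fun j => origV d j ∈ F) (fun j => newV d j ∈ F)}

lemma aux_mem_Inv {i t : ℕ} {F : Finset (V d)} :
    F ∈ Inv d i t ↔ InvP d i t (fun j => origV d j ∈ F) (fun j => newV d j ∈ F) :=
  Iff.rfl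

lemma aux_Inv_closed {i t : ℕ} : ∀ F ∈ Inv d i t, ∀ G, G ⊆ F → G ∈ Inv d i t := by
  rintro F ⟨h1, h2, h3, h4, m, hm1, hm2, hm3⟩ G hG
  exact ⟨fun h => h1 (hG h), fun j hj h => h2 j hj (hG h),
    fun j hj1 hj2 h => h3 j hj1 hj2 (hG h),
    fun j hj1 hj2 h => h4 j hj1 hj2 ⟨hG h.1, hG h.2⟩,
    ⟨m, hm1, hm2, fun h => hm3 (hG h)⟩⟩

lemma aux_InvP_mono {i t : ℕ} {o o' n n' : ℕ → Prop} (hi : i ≤ d+1) (ht : t ≤ d+1)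
    (ho : ∀ j, j ≤ d+1 → (o' j → o j)) (hn : ∀ j, j ≤ d → (n' j → n j)) :
    InvP d i t o n → InvP d i t o' n' := by
  rintro ⟨h1, h2, h3, h4, m, hm1, hm2, hm3⟩
  refine ⟨fun h => h1 (ho i hi h), fun j hj h => h2 j hj (hn j (by omega) h),
    fun j hj1 hj2 h => h3 j hj1 hj2 (hn j hj2 h),
    fun j hj1 hj2 h => h4 j hj1 hj2 ⟨ho j (by omega) h.1, hn j (by omega) h.2⟩,
    m, hm1, hm2, fun h => hm3 (ho m hm2 h)⟩

lemma aux_InvP_congr {i t : ℕ} {o o' n n' : ℕ → Prop} (hi : i ≤ d+1) (ht : t ≤ d+1)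
    (ho : ∀ j, j ≤ d+1 → (o j ↔ o' j)) (hn : ∀ j, j ≤ d → (n j ↔ n' j)) :
    InvP d i t o n ↔ InvP d i t o' n' :=
  ⟨aux_InvP_mono hi ht (fun j hj => (ho j hj).mpr) (fun j hj => (hn j hj).mpr),
   aux_InvP_mono hi ht (fun j hj => (ho j hj).mp) (fun j hj => (hn j hj).mp)⟩

/-- Clean characterization of membership in a stellar subdivision of a complex. -/
lemma aux_mem_sdC_iff {Δ : Set (Finset W)} {v : W} {A F : Finset W}
    (hΔ : ∀ F ∈ Δ, ∀ G, G ⊆ F → G ∈ Δ) (hv : v ∉ A) :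
    F ∈ sdC v A Δ ↔ ¬ A ⊆ F ∧ (F ∈ Δ ∨ A ∪ (F \ insert v A) ∈ Δ) := by
  constructor
  · rintro (hF | hF)
    · exact ⟨hF.2, Or.inl hF.1⟩
    · obtain ⟨a, ha, b, ⟨b1, hb1, b2, hb2, rfl⟩, rfl⟩ := hF
      have hb1' : b1 ⊂ A := hb1
      have haV : a ⊆ {v} := ha
      have hb2' : Disjoint A b2 ∧ A ∪ b2 ∈ Δ := hb2
      constructor
      · intro hAF
        obtain ⟨x, hxA, hxb1⟩ := Finset.exists_of_ssubset hb1'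
        rcases Finset.mem_union.mp (hAF hxA) with h | h
        · have : x = v := Finset.mem_singleton.mp (haV h)
          exact hv (this ▸ hxA)
        · rcases Finset.mem_union.mp h with h | h
          · exact hxb1 h
          · exact Finset.disjoint_left.mp hb2'.1 hxA h
      · refine Or.inr (hΔ _ hb2'.2 _ ?_)
        intro x hx
        rcases Finset.mem_union.mp hx with h | h
        · exact Finset.mem_union_left _ h
        · obtain ⟨hxF, hxi⟩ := Finset.mem_sdiff.mp h
          have hxv : x ≠ v := fun he => hxi (Finset.mem_insert.mpr (Or.inl he))
          have hxA : x ∉ A := fun he => hxi (Finset.mem_insert.mpr (Or.inr he))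
          rcases Finset.mem_union.mp hxF with h' | h'
          · exact absurd (Finset.mem_singleton.mp (haV h')) hxv
          · rcases Finset.mem_union.mp h' with h' | h'
            · exact absurd (hb1'.subset h') hxA
            · exact Finset.mem_union_right _ h'
  · rintro ⟨h1, (h2 | h2)⟩
    · exact Or.inl ⟨h2, h1⟩
    · refine Or.inr ⟨F ∩ {v}, Finset.inter_subset_right, (F ∩ A) ∪ (F \ insert v A),
        ⟨F ∩ A, ?_, F \ insert v A, ⟨?_, h2⟩, rfl⟩, ?_⟩
      · refine Finset.ssubset_iff_subset_ne.mpr ⟨Finset.inter_subset_right, fun h => h1 ?_⟩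
        intro x hx
        rw [← h] at hx
        exact Finset.mem_of_mem_inter_left hx
      · refine Finset.disjoint_left.mpr ?_
        intro x hxA hxS
        exact (Finset.mem_sdiff.mp hxS).2 (Finset.mem_insert.mpr (Or.inr hxA))
      · ext x
        simp only [Finset.mem_union, Finset.mem_inter, Finset.mem_singleton,
          Finset.mem_sdiff, Finset.mem_insert]
        constructor
        · intro hx
          by_cases hxv : x = v
          · tauto
          · by_cases hxA : x ∈ A <;> tauto
        · tauto

lemma aux_sdC_noop {Δ : Set (Finset W)} {v : W} {A : Finset W}
    (h : ∀ G ∈ Δ, ¬ A ⊆ G) : sdC v A Δ = Δ := by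
  ext F
  constructor
  · rintro (hF | hF)
    · exact hF.1
    · obtain ⟨a, ha, b, ⟨b1, hb1, b2, hb2, rfl⟩, rfl⟩ := hF
      have hb2' : Disjoint A b2 ∧ A ∪ b2 ∈ Δ := hb2
      exact absurd Finset.subset_union_left (h _ hb2'.2)
  · intro hF
    exact Or.inl ⟨hF, h F hF⟩

lemma aux_mem_B_orig {j t : ℕ} {F : Finset (V d)} (hj : j ≤ d+1) :
    origV d j ∈ Fsub d t ∪ (F \ insert (newV d t) (Fsub d t)) ↔
      (t < j ∧ j ≤ d+1) ∨ (origV d j ∈ F ∧ j ≤ t) := by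
  simp only [Finset.mem_union, Finset.mem_sdiff, Finset.mem_insert,
    aux_origV_mem_Fsub hj]
  constructor
  · rintro (h | ⟨hm, hne⟩)
    · exact Or.inl ⟨h, hj⟩
    · have : ¬ t < j := fun hh => hne (Or.inr hh)
      exact Or.inr ⟨hm, by omega⟩
  · rintro (⟨h, _⟩ | ⟨hm, hle⟩)
    · exact Or.inl h
    · refine Or.inr ⟨hm, ?_⟩
      rintro (he | hlt)
      · exact aux_origV_ne_newV j t he
      · omega

lemma aux_mem_B_new {j t : ℕ} {F : Finset (V d)} (hj : j ≤ d) (ht : t ≤ d) :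
    newV d j ∈ Fsub d t ∪ (F \ insert (newV d t) (Fsub d t)) ↔
      (newV d j ∈ F ∧ j ≠ t) := by
  simp only [Finset.mem_union, Finset.mem_sdiff, Finset.mem_insert]
  constructor
  · rintro (h | ⟨hm, hne⟩)
    · exact absurd h aux_newV_not_mem_Fsub
    · refine ⟨hm, fun he => hne (Or.inl ?_)⟩
      rw [aux_newV_inj hj ht]; exact he
  · rintro ⟨hm, hne⟩
    refine Or.inr ⟨hm, ?_⟩
    rintro (he | hmem)
    · exact hne ((aux_newV_inj hj ht).mp he)
    · exact aux_newV_not_mem_Fsub hmem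

lemma aux_key {i t : ℕ} (hi : i < t) (ht : t ≤ d) (o n : ℕ → Prop) :
    ((∃ m, t < m ∧ m ≤ d+1 ∧ ¬ o m) ∧
      (InvP d i t o n ∨
        InvP d i t (fun j => (t < j ∧ j ≤ d+1) ∨ (o j ∧ j ≤ t)) (fun j => n j ∧ j ≠ t)))
    ↔ InvP d i (t+1) o n := by
  unfold InvP
  constructor
  · rintro ⟨⟨m, hm1, hm2, hm3⟩, (⟨h1, h2, h3, h4, _⟩ | ⟨h1, h2, h3, h4, m', hm'1, hm'2, hm'3⟩)⟩
    · refine ⟨h1, h2, fun j hj1 hj2 => h3 j (by omega) hj2, ?_, ⟨m, by omega, hm2, hm3⟩⟩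
      intro j hj1 hj2
      rcases Nat.lt_or_ge j t with h | h
      · exact h4 j hj1 h
      · have hjt : j = t := by omega
        subst hjt
        exact fun hc => h3 j le_rfl ht hc.2
    · have hmt : m' = t := by
        by_contra hne
        exact hm'3 (Or.inl ⟨by omega, hm'2⟩)
      subst hmt
      have hot : ¬ o m' := fun h => hm'3 (Or.inr ⟨h, le_rfl⟩)
      refine ⟨fun h => h1 (Or.inr ⟨h, by omega⟩), fun j hj h => h2 j hj ⟨h, by omega⟩,
        fun j hj1 hj2 h => h3 j (by omega) hj2 ⟨h, by omega⟩, ?_, ⟨m, by omega, hm2, hm3⟩⟩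
      intro j hj1 hj2
      rcases Nat.lt_or_ge j m' with h | h
      · exact fun hc => h4 j hj1 h ⟨Or.inr ⟨hc.1, by omega⟩, hc.2, by omega⟩
      · have hjt : j = m' := by omega
        subst hjt
        exact fun hc => hot hc.1
  · rintro ⟨h1, h2, h3, h4, m, hm1, hm2, hm3⟩
    refine ⟨⟨m, by omega, hm2, hm3⟩, ?_⟩
    by_cases hnt : n t
    · right
      refine ⟨?_, fun j hj h => h2 j hj h.1, ?_, ?_, t, le_rfl, by omega, ?_⟩
      · rintro (⟨h, _⟩ | ⟨h, _⟩)
        · omega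
        · exact h1 h
      · rintro j hj1 hj2 ⟨hn, hne⟩
        exact h3 j (by omega) hj2 hn
      · rintro j hj1 hj2 ⟨ho', hn'⟩
        rcases ho' with ⟨h, _⟩ | ⟨h, _⟩
        · omega
        · exact h4 j hj1 (by omega) ⟨h, hn'.1⟩
      · rintro (⟨h, _⟩ | ⟨h, _⟩)
        · omega
        · exact h4 t hi (by omega) ⟨h, hnt⟩
    · left
      refine ⟨h1, h2, ?_, fun j hj1 hj2 => h4 j hj1 (by omega), ⟨m, by omega, hm2, hm3⟩⟩
      intro j hj1 hj2
      rcases Nat.eq_or_lt_of_le hj1 with h' | h'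
      · exact h' ▸ hnt
      · exact h3 j (by omega) hj2

lemma aux_key0 {i : ℕ} (hi : i ≤ d) (o n : ℕ → Prop) :
    ((∃ m, i < m ∧ m ≤ d+1 ∧ ¬ o m) ∧
      ((¬ o i ∧ ∀ j, j ≤ d → ¬ n j) ∨ (¬ o i ∧ ∀ j, j ≤ d → ¬ (n j ∧ j ≠ i))))
    ↔ InvP d i (i+1) o n := by
  unfold InvP
  constructor
  · rintro ⟨⟨m, hm1, hm2, hm3⟩, (⟨h1, h2⟩ | ⟨h1, h2⟩)⟩
    · exact ⟨h1, fun j hj => h2 j (by omega), fun j hj1 hj2 => h2 j hj2,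
        fun j hj1 hj2 => absurd hj1 (by omega), ⟨m, by omega, hm2, hm3⟩⟩
    · refine ⟨h1, fun j hj h => h2 j (by omega) ⟨h, by omega⟩,
        fun j hj1 hj2 h => h2 j hj2 ⟨h, by omega⟩,
        fun j hj1 hj2 => absurd hj1 (by omega), ⟨m, by omega, hm2, hm3⟩⟩
  · rintro ⟨h1, h2, h3, h4, m, hm1, hm2, hm3⟩
    refine ⟨⟨m, by omega, hm2, hm3⟩, Or.inr ⟨h1, ?_⟩⟩
    rintro j hj ⟨hn, hne⟩
    rcases Nat.lt_or_ge j i with h | h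
    · exact h2 j h hn
    · exact h3 j (by omega) hj hn

lemma aux_not_subset {t : ℕ} {F : Finset (V d)} :
    (¬ Fsub d t ⊆ F) ↔ ∃ m, t < m ∧ m ≤ d+1 ∧ origV d m ∉ F := by
  rw [aux_Fsub_subset_iff]
  push_neg
  rfl

lemma aux_step_eq {i t : ℕ} (hi : i < t) (ht : t ≤ d) :
    sdC (newV d t) (Fsub d t) (Inv d i t) = Inv d i (t+1) := by
  ext F
  rw [aux_mem_sdC_iff aux_Inv_closed aux_newV_not_mem_Fsub, aux_not_subset]
  have hB : (Fsub d t ∪ (F \ insert (newV d t) (Fsub d t)) ∈ Inv d i t) ↔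
      InvP d i t (fun j => (t < j ∧ j ≤ d+1) ∨ (origV d j ∈ F ∧ j ≤ t))
        (fun j => newV d j ∈ F ∧ j ≠ t) := by
    rw [aux_mem_Inv]
    exact aux_InvP_congr (by omega) (by omega)
      (fun j hj => aux_mem_B_orig hj) (fun j hj => aux_mem_B_new hj ht)
  rw [aux_mem_Inv, hB]
  exact aux_key hi ht _ _

lemma aux_base_eq {i : ℕ} (hi : i ≤ d) :
    sdC (newV d i) (Fsub d i) (GammaC d i) = Inv d i (i+1) := by
  ext F
  rw [aux_mem_sdC_iff aux_GammaC_closed aux_newV_not_mem_Fsub, aux_not_subset]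
  have hB : (Fsub d i ∪ (F \ insert (newV d i) (Fsub d i)) ∈ GammaC d i) ↔
      (origV d i ∉ F ∧ ∀ j, j ≤ d → ¬ (newV d j ∈ F ∧ j ≠ i)) := by
    rw [aux_mem_GammaC (by omega)]
    constructor
    · rintro ⟨h1, h2⟩
      refine ⟨fun h => h1 ((aux_mem_B_orig (by omega)).mpr (Or.inr ⟨h, le_rfl⟩)), ?_⟩
      intro j hj hc
      exact h2 j hj ((aux_mem_B_new hj hi).mpr hc)
    · rintro ⟨h1, h2⟩
      constructor
      · intro h
        rcases (aux_mem_B_orig (by omega)).mp h with ⟨h', _⟩ | ⟨h', _⟩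
        · omega
        · exact h1 h'
      · intro j hj h
        exact h2 j hj ((aux_mem_B_new hj hi).mp h)
  rw [aux_mem_GammaC (by omega), aux_mem_Inv, hB]
  exact aux_key0 hi _ _

lemma aux_noop {i r : ℕ} (hr : r < i) (hi : i ≤ d+1) :
    sdC (newV d r) (Fsub d r) (GammaC d i) = GammaC d i := by
  apply aux_sdC_noop
  intro G hG hsub
  have h1 : origV d i ∉ G := ((aux_mem_GammaC hi).mp hG).1
  exact h1 (hsub ((aux_origV_mem_Fsub hi).mpr hr))

lemma aux_fold_eq {i : ℕ} (hi : i ≤ d) :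
    ∀ t, t ≤ d+1 →
      (List.range t).foldl (fun Γ r => sdC (newV d r) (Fsub d r) Γ) (GammaC d i) =
        if t ≤ i then GammaC d i else Inv d i t := by
  intro t
  induction t with
  | zero => intro _; simp
  | succ t ih =>
    intro ht
    rw [List.range_succ, List.foldl_append, List.foldl_cons, List.foldl_nil, ih (by omega)]
    rcases lt_trichotomy t i with h | h | h
    · rw [if_pos (by omega), if_pos (by omega)]
      exact aux_noop h (by omega)
    · subst h
      rw [if_pos le_rfl, if_neg (by omega)]
      exact aux_base_eq hi
    · rw [if_neg (by omega), if_neg (by omega)]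
      exact aux_step_eq h (by omega)

/-- The final description of `⋄(Γ_i)`. -/
def Dfin (d i : ℕ) : Set (Finset (V d)) :=
  {F | origV d i ∉ F ∧ origV d (d+1) ∉ F ∧ (∀ j, j < i → j ≤ d → newV d j ∉ F) ∧
    ∀ j, i < j → j ≤ d → ¬ (origV d j ∈ F ∧ newV d j ∈ F)}

lemma aux_diam_eq {i : ℕ} (hi : i ≤ d+1) : Diam d (GammaC d i) = Dfin d i := by
  unfold Diam
  rcases Nat.lt_or_ge i (d+1) with h | h
  · rw [aux_fold_eq (by omega) (d+1) le_rfl, if_neg (by omega)]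
    ext F
    rw [aux_mem_Inv]
    unfold InvP Dfin
    simp only [Set.mem_setOf_eq]
    constructor
    · rintro ⟨h1, h2, h3, h4, m, hm1, hm2, hm3⟩
      have hm : m = d+1 := by omega
      subst hm
      exact ⟨h1, hm3, fun j hj _ => h2 j hj, fun j hj1 hj2 => h4 j hj1 (by omega)⟩
    · rintro ⟨h1, h2, h3, h4⟩
      exact ⟨h1, fun j hj => h3 j hj (by omega),
        fun j hj1 hj2 => absurd (hj1.trans hj2) (by omega),
        fun j hj1 hj2 => h4 j hj1 (by omega), d+1, le_rfl, le_rfl, h2⟩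
  · have hi' : i = d+1 := by omega
    subst hi'
    have hfold : ∀ t, t ≤ d+1 →
        (List.range t).foldl (fun Γ r => sdC (newV d r) (Fsub d r) Γ)
          (GammaC d (d+1)) = GammaC d (d+1) := by
      intro t
      induction t with
      | zero => intro _; simp
      | succ t ih =>
        intro ht
        rw [List.range_succ, List.foldl_append, List.foldl_cons, List.foldl_nil,
          ih (by omega)]
        exact aux_noop (by omega) le_rfl
    rw [hfold (d+1) le_rfl]
    ext F
    rw [aux_mem_GammaC le_rfl]
    unfold Dfin
    simp only [Set.mem_setOf_eq]
    constructor
    · rintro ⟨h1, h2⟩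
      exact ⟨h1, h1, fun j hj1 hj2 => h2 j hj2,
        fun j hj1 hj2 => absurd (hj1.trans_le hj2) (by omega)⟩
    · rintro ⟨h1, h2, h3, h4⟩
      exact ⟨h1, fun j hj => h3 j (by omega) hj⟩

end Stmt4Aux

/-- `⋄(Γ_k) ≅ ⋃_{i=k+1}^{d+1} ⋄(Γ_i)` via switching `k` and `v_k`. -/
theorem stmt4 (d k : ℕ) (h : k ≤ d) :
    ∀ F : Finset (V d),
      F ∈ Diam d (GammaC d k) ↔
        F.image (⇑(Equiv.swap (origV d k) (newV d k))) ∈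
          {G | ∃ i, k < i ∧ i ≤ d+1 ∧ G ∈ Diam d (GammaC d i)} := by
  intro F
  have hkd1 : k ≤ d+1 := by omega
  rw [aux_diam_eq hkd1]
  simp only [Set.mem_setOf_eq]
  set e := Equiv.swap (origV d k) (newV d k) with he
  have hGmem : ∀ x : V d, x ∈ F.image ⇑e ↔ e x ∈ F := by
    intro x
    rw [Finset.mem_image]
    constructor
    · rintro ⟨y, hy, rfl⟩
      rwa [Equiv.swap_apply_self]
    · intro hx
      exact ⟨e x, hx, Equiv.swap_apply_self _ _ _⟩
  have hGo : ∀ j, j ≤ d+1 → j ≠ k → (origV d j ∈ F.image ⇑e ↔ origV d j ∈ F) := by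
    intro j hj hne
    rw [hGmem, he, Equiv.swap_apply_of_ne_of_ne
      (fun hc => hne ((aux_origV_inj hj hkd1).mp hc)) (aux_origV_ne_newV j k)]
  have hGok : origV d k ∈ F.image ⇑e ↔ newV d k ∈ F := by
    rw [hGmem, he, Equiv.swap_apply_left]
  have hGnk : newV d k ∈ F.image ⇑e ↔ origV d k ∈ F := by
    rw [hGmem, he, Equiv.swap_apply_right]
  have hGn : ∀ j, j ≤ d → j ≠ k → (newV d j ∈ F.image ⇑e ↔ newV d j ∈ F) := by
    intro j hj hne
    rw [hGmem, he, Equiv.swap_apply_of_ne_of_ne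
      (fun hc => aux_origV_ne_newV k j hc.symm)
      (fun hc => hne ((aux_newV_inj hj h).mp hc))]
  constructor
  · rintro ⟨hk1, hk2, hk3, hk4⟩
    by_cases hex : ∃ j, k < j ∧ j ≤ d ∧ newV d j ∈ F
    · set i := Nat.find hex with hidef
      obtain ⟨hi1, hi2, hi3⟩ := Nat.find_spec hex
      refine ⟨i, hi1, by omega, ?_⟩
      rw [aux_diam_eq (by omega : i ≤ d+1)]
      refine ⟨?_, ?_, ?_, ?_⟩
      · rw [hGo i (by omega) (by omega)]
        exact fun hc => hk4 i hi1 hi2 ⟨hc, hi3⟩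
      · rw [hGo (d+1) le_rfl (by omega)]
        exact hk2
      · intro j hj hjd
        rcases lt_trichotomy j k with hc | hc | hc
        · rw [hGn j hjd (by omega)]
          exact hk3 j hc hjd
        · subst hc
          rw [hGnk]
          exact hk1
        · rw [hGn j hjd (by omega)]
          exact fun hm => Nat.find_min hex hj ⟨hc, hjd, hm⟩
      · rintro j hj1 hj2 ⟨hm1, hm2⟩
        rw [hGo j (by omega) (by omega)] at hm1
        rw [hGn j hj2 (by omega)] at hm2
        exact hk4 j (by omega) hj2 ⟨hm1, hm2⟩
    · refine ⟨d+1, by omega, le_rfl, ?_⟩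
      rw [aux_diam_eq (le_refl (d+1))]
      refine ⟨?_, ?_, ?_, ?_⟩
      · rw [hGo (d+1) le_rfl (by omega)]
        exact hk2
      · rw [hGo (d+1) le_rfl (by omega)]
        exact hk2
      · intro j hj hjd
        rcases lt_trichotomy j k with hc | hc | hc
        · rw [hGn j hjd (by omega)]
          exact hk3 j hc hjd
        · subst hc
          rw [hGnk]
          exact hk1
        · rw [hGn j hjd (by omega)]
          exact fun hm => hex ⟨j, hc, hjd, hm⟩
      · intro j hj1 hj2
        exact absurd (hj1.trans_le hj2) (by omega)
  · rintro ⟨i, hi1, hi2, hG⟩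
    rw [aux_diam_eq hi2] at hG
    obtain ⟨g1, g2, g3, g4⟩ := hG
    refine ⟨?_, ?_, ?_, ?_⟩
    · exact fun hc => g3 k hi1 h (hGnk.mpr hc)
    · exact fun hc => g2 ((hGo (d+1) le_rfl (by omega)).mpr hc)
    · intro j hj hjd hc
      exact g3 j (by omega) hjd ((hGn j hjd (by omega)).mpr hc)
    · rintro j hj1 hj2 ⟨hm1, hm2⟩
      have hm1' : origV d j ∈ F.image ⇑e := (hGo j (by omega) (by omega)).mpr hm1
      have hm2' : newV d j ∈ F.image ⇑e := (hGn j hj2 (by omega)).mpr hm2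
      rcases lt_trichotomy j i with hc | hc | hc
      · exact g3 j hc hj2 hm2'
      · subst hc
        exact g1 hm1'
      · exact g4 j hc hj2 ⟨hm1', hm2'⟩


end Paper
end

section
/- Let $k\ge 1$, $0\le \ell\le d$, and $0\le i_1<\cdots<i_k<\ell$. Then $\Diamond(\Gamma_{i_1},\ldots,\Gamma_{i_k},\Gamma_\ell)$ is isomorphic to $\Diamond(\Gamma_{i_1},\ldots,\Gamma_{i_k},\Gamma_{\ell+1},\ldots,\Gamma_{d+1})$, and the isomorphism is induced by the vertex map $\psi_\ell$ switching $\ell$ and $v_\ell$ and fixing all other vertices. -/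
/-!
Unfolding the stellar subdivisions one at a time, `⋄(Γ_i)` is the join of the simplex on
`{0,…,i-1,v_i}` with the boundary of the cross-polytope on the pairs `{j, v_j}`, `i < j ≤ d`,
and `⋄` commutes with unions of complexes. For `i < ℓ` the pair `{ℓ, v_ℓ}` is one of these
cross-polytope pairs, so `ψ_ℓ` preserves `⋄(Γ_i)`. On the other hand `ψ_ℓ` carries `⋄(Γ_ℓ)` onto
the join of the simplex on `{0,…,ℓ}` with the cross-polytope on the pairs `j > ℓ`, and sorting
its faces by their smallest new vertex `v_j` (or `j = d+1` if there is none) exhibits this join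
as the union of the `⋄(Γ_j)`, `ℓ < j ≤ d+1`.
-/

namespace Paper

variable {W : Type*} [DecidableEq W] {W' : Type*} [DecidableEq W']

section Stellar

lemma sdC_iUnion {ι : Sort*} (v : W) (F : Finset W) (B : ι → Set (Finset W)) :
    sdC v F (⋃ i, B i) = ⋃ i, sdC v F (B i) := by
  ext G
  simp only [sdC, delFace, joinC, lkC, Set.mem_union, Set.mem_ofPred_eq, Set.mem_iUnion]
  constructor
  · rintro (⟨⟨i, hi⟩, hF⟩ | ⟨a, ha, _, ⟨b, hb, c, ⟨hdisj, i, hi⟩, rfl⟩, rfl⟩)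
    · exact ⟨i, .inl ⟨hi, hF⟩⟩
    · exact ⟨i, .inr ⟨a, ha, _, ⟨b, hb, c, ⟨hdisj, hi⟩, rfl⟩, rfl⟩⟩
  · rintro ⟨i, ⟨hi, hF⟩ | ⟨a, ha, _, ⟨b, hb, c, ⟨hdisj, hi⟩, rfl⟩, rfl⟩⟩
    · exact .inl ⟨⟨i, hi⟩, hF⟩
    · exact .inr ⟨a, ha, _, ⟨b, hb, c, ⟨hdisj, i, hi⟩, rfl⟩, rfl⟩

lemma mem_image_swap {u w x : W} {F : Finset W} :
    x ∈ F.image (Equiv.swap u w) ↔ Equiv.swap u w x ∈ F := by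
  conv_lhs => rw [← Equiv.swap_apply_self u w x]
  exact (Equiv.injective _).mem_finset_image

lemma image_swap_image_swap (u w : W) (F : Finset W) :
    (F.image (Equiv.swap u w)).image (Equiv.swap u w) = F := by
  ext x
  rw [mem_image_swap, mem_image_swap, Equiv.swap_apply_self]

variable {Δ : Set (Finset W)} {v : W} {F G : Finset W}

lemma mem_sdC_of_notMem (hΔ : IsComplex Δ) (hG : v ∉ G) :
    G ∈ sdC v F Δ ↔ G ∈ Δ ∧ ¬ F ⊆ G := by
  refine ⟨?_, .inl⟩
  rintro (hG' | ⟨a, ha, _, ⟨b, hb, c, ⟨hdisj, hFc⟩, rfl⟩, rfl⟩)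
  · exact hG'
  obtain rfl : a = ∅ := by
    rcases Finset.subset_singleton_iff.1 ha with rfl | rfl
    · rfl
    · simp at hG
  refine ⟨hΔ _ hFc _ (by simpa using Finset.union_subset_union_left hb.subset), fun hF => ?_⟩
  refine not_subset_of_ssubset (show b ⊂ F from hb) fun x hx => ?_
  have := hF hx
  simp only [Finset.empty_union, Finset.mem_union] at this
  exact this.resolve_right (Finset.disjoint_left.1 hdisj hx)

lemma mem_sdC_of_mem (hv : ∀ H ∈ Δ, v ∉ H) (hG : v ∈ G) :
    G ∈ sdC v F Δ ↔ ¬ F ⊆ G.erase v ∧ F ∪ G.erase v ∈ Δ := by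
  constructor
  · rintro (⟨hG', -⟩ | ⟨a, ha, _, ⟨b, hb, c, ⟨hdisj, hFc⟩, rfl⟩, rfl⟩)
    · exact absurd hG (hv G hG')
    have hvbc : v ∉ b ∪ c := fun h => hv _ hFc
      (Finset.union_subset_union_left hb.subset h)
    have ha' : a = {v} := by
      rcases Finset.subset_singleton_iff.1 ha with rfl | rfl
      · exact absurd (by simpa using hG) hvbc
      · rfl
    subst ha'
    rw [Finset.singleton_union, Finset.erase_insert hvbc]
    refine ⟨fun hF => not_subset_of_ssubset (show b ⊂ F from hb) fun x hx => ?_, by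
      rwa [← Finset.union_assoc, Finset.union_eq_left.2 hb.subset]⟩
    exact (Finset.mem_union.1 (hF hx)).resolve_right (Finset.disjoint_left.1 hdisj hx)
  · rintro ⟨hF, hΔF⟩
    refine .inr ⟨{v}, Finset.Subset.refl _, _, ⟨G.erase v ∩ F, ?_, G.erase v \ F,
      ⟨Finset.disjoint_sdiff, ?_⟩, rfl⟩, ?_⟩
    · exact ssubset_of_subset_not_subset Finset.inter_subset_right
        fun h => hF (h.trans Finset.inter_subset_left)
    · rwa [Finset.union_sdiff_self_eq_union]
    · rw [show G.erase v ∩ F ∪ G.erase v \ F = G.erase v from sup_inf_sdiff _ _,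
        Finset.singleton_union, Finset.insert_erase hG]

end Stellar

section Vertices

variable {d : ℕ}

lemma inl_mem_Gface {i : ℕ} {a : Fin (d + 2)} : Sum.inl a ∈ Gface d i ↔ (a : ℕ) ≠ i := by
  simp only [Gface, origV, Finset.mem_image, Finset.mem_filter, Finset.mem_range, Sum.inl.injEq,
    Fin.ext_iff]
  constructor
  · rintro ⟨m, ⟨hm, hmi⟩, hma⟩
    rwa [← hma, Nat.mod_eq_of_lt hm]
  · exact fun h => ⟨a, ⟨a.isLt, h⟩, Nat.mod_eq_of_lt a.isLt⟩

lemma inr_notMem_Gface {i : ℕ} {b : Fin (d + 1)} : Sum.inr b ∉ Gface d i := by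
  simp [Gface, origV]

@[simp]
lemma inl_mem_Fsub {t : ℕ} {a : Fin (d + 2)} : Sum.inl a ∈ Fsub d t ↔ t < a := by
  simp only [Fsub, origV, Finset.mem_image, Finset.mem_Ioc, Sum.inl.injEq, Fin.ext_iff]
  constructor
  · rintro ⟨m, ⟨htm, hm⟩, hma⟩
    rwa [← hma, Nat.mod_eq_of_lt (by omega)]
  · exact fun h => ⟨a, ⟨h, by omega⟩, Nat.mod_eq_of_lt a.isLt⟩

@[simp]
lemma inr_notMem_Fsub {t : ℕ} {b : Fin (d + 1)} : Sum.inr b ∉ Fsub d t := by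
  simp [Fsub, origV]

lemma Fsub_subset_iff {t : ℕ} {G : Finset (V d)} :
    Fsub d t ⊆ G ↔ ∀ a : Fin (d + 2), t < a → Sum.inl a ∈ G := by
  refine ⟨fun h a ha => h (inl_mem_Fsub.2 ha), fun h => ?_⟩
  rintro (a | b) hx
  · exact h a (inl_mem_Fsub.1 hx)
  · exact absurd hx inr_notMem_Fsub

lemma not_Fsub_subset_iff {t : ℕ} {G : Finset (V d)} :
    ¬ Fsub d t ⊆ G ↔ ∃ a : Fin (d + 2), t < a ∧ Sum.inl a ∉ G := by
  simp [Fsub_subset_iff]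

section

variable (c : Fin (d + 1))

lemma origV_val : origV d c = Sum.inl c.castSucc := by
  simp [origV, Fin.ext_iff, Nat.mod_eq_of_lt (Nat.lt_succ_of_lt c.isLt)]

lemma newV_val : newV d c = Sum.inr c := by
  simp [newV, Nat.mod_eq_of_lt c.isLt]

lemma swap_inl_of_ne {a : Fin (d + 2)} (ha : a ≠ c.castSucc) :
    Equiv.swap (Sum.inl c.castSucc) (Sum.inr c) (Sum.inl a : V d) = Sum.inl a :=
  Equiv.swap_apply_of_ne_of_ne (by simpa) (by simp)

lemma swap_inr_of_ne {b : Fin (d + 1)} (hb : b ≠ c) :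
    Equiv.swap (Sum.inl c.castSucc) (Sum.inr c) (Sum.inr b : V d) = Sum.inr b :=
  Equiv.swap_apply_of_ne_of_ne (by simp) (by simpa)

end

end Vertices

section Stage

variable {d : ℕ}

/-- For `i < t`, the join of the simplex on `{0,…,i-1,v_i}`, the boundary of the cross-polytope on
the pairs `{j, v_j}` with `i < j < t`, and the boundary of the simplex on `{t,…,d+1}`: this is what
the subdivisions at `F_0,…,F_{t-1}` make of `Γ_i`. For `t ≤ i` it is still `Γ_i`. -/
def diamondStage (d i t : ℕ) : Set (Finset (V d)) := {F |
  (∀ a : Fin (d + 2), Sum.inl a ∈ F → (a : ℕ) ≠ i) ∧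
  (∀ b : Fin (d + 1), Sum.inr b ∈ F → i ≤ b ∧ (b : ℕ) < t) ∧
  (∀ b : Fin (d + 1), i < b → Sum.inr b ∈ F → Sum.inl b.castSucc ∉ F) ∧
  ∃ a : Fin (d + 2), t ≤ a ∧ Sum.inl a ∉ F}

variable {i t : ℕ}

lemma isComplex_diamondStage : IsComplex (diamondStage d i t) := by
  rintro F ⟨hl, hr, hpair, a, hta, ha⟩ G hGF
  exact ⟨fun a h => hl a (hGF h), fun b h => hr b (hGF h),
    fun b hib h h' => hpair b hib (hGF h) (hGF h'), a, hta, fun h => ha (hGF h)⟩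

lemma inr_notMem_diamondStage (c : Fin (d + 1)) :
    ∀ F ∈ diamondStage d i c, Sum.inr c ∉ F :=
  fun _ ⟨_, hr, _⟩ h => (hr c h).2.false

lemma diamondStage_zero (hi : i < d + 2) : diamondStage d i 0 = GammaC d i := by
  ext F
  simp only [diamondStage, GammaC, simplexOn, Set.mem_ofPred_eq]
  constructor
  · rintro ⟨hl, hr, -⟩ (a | b) h
    · exact inl_mem_Gface.2 (hl a h)
    · exact absurd (hr b h).2 (Nat.not_lt_zero _)
  · intro hF
    refine ⟨fun a h => inl_mem_Gface.1 (hF h), fun b h => absurd (hF h) inr_notMem_Gface,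
      fun b _ h => absurd (hF h) inr_notMem_Gface, ⟨i, hi⟩, Nat.zero_le _, fun h => ?_⟩
    exact inl_mem_Gface.1 (hF h) rfl

section Subdivision

variable {c : Fin (d + 1)} {G : Finset (V d)}

lemma mem_diamondStage_succ_iff_of_inr_mem (hi : i < d + 2) (hG : Sum.inr c ∈ G) :
    G ∈ diamondStage d i (c + 1) ↔
      ¬ Fsub d c ⊆ G.erase (Sum.inr c) ∧ Fsub d c ∪ G.erase (Sum.inr c) ∈ diamondStage d i c := by
  have mem_inl {a : Fin (d + 2)} : Sum.inl a ∈ Fsub d c ∪ G.erase (Sum.inr c) ↔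
      (c : ℕ) < a ∨ Sum.inl a ∈ G := by simp
  have mem_inr {b : Fin (d + 1)} : Sum.inr b ∈ Fsub d c ∪ G.erase (Sum.inr c) ↔
      b ≠ c ∧ Sum.inr b ∈ G := by simp
  constructor
  · rintro ⟨hl, hr, hpair, a, hca, ha⟩
    have hic : i ≤ c := (hr c hG).1
    have hcG : Sum.inl c.castSucc ∉ G := by
      rcases hic.lt_or_eq with hic | hic
      · exact hpair c hic hG
      · exact fun h => hl _ h hic.symm
    refine ⟨fun hsub => ha (Finset.mem_of_mem_erase (hsub (inl_mem_Fsub.2 hca))),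
      fun a h => ?_, fun b h => ?_, fun b hib h h' => ?_, c.castSucc, by simp, fun h => ?_⟩
    · rcases mem_inl.1 h with hca | h
      · omega
      · exact hl a h
    · obtain ⟨hbc, h⟩ := mem_inr.1 h
      have := hr b h
      have := Fin.val_ne_of_ne hbc
      omega
    · obtain ⟨hbc, h⟩ := mem_inr.1 h
      rcases mem_inl.1 h' with hcb | h'
      · have := (hr b h).2
        have := Fin.val_ne_of_ne hbc
        rw [Fin.val_castSucc] at hcb
        omega
      · exact hpair b hib h h'
    · rcases mem_inl.1 h with hcc | h
      · simp at hcc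
      · exact hcG h
  · rintro ⟨hsub, hl, hr, hpair, a, hca, ha⟩
    have hic : i ≤ c := by
      by_contra! hci
      exact hl ⟨i, hi⟩ (mem_inl.2 (.inl hci)) rfl
    obtain rfl : a = c.castSucc := by
      have := mt (mem_inl.2 ∘ .inl) ha
      exact Fin.ext (by rw [Fin.val_castSucc]; omega)
    obtain ⟨a', hca', ha'⟩ := not_Fsub_subset_iff.1 hsub
    refine ⟨fun a h => hl a (mem_inl.2 (.inr h)), fun b h => ?_, fun b hib h h' => ?_,
      a', hca', fun h => ha' (Finset.mem_erase.2 ⟨by simp, h⟩)⟩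
    · by_cases hbc : b = c
      · subst hbc
        omega
      · have := hr b (mem_inr.2 ⟨hbc, h⟩)
        omega
    · by_cases hbc : b = c
      · exact ha (mem_inl.2 (.inr (hbc ▸ h')))
      · exact hpair b hib (mem_inr.2 ⟨hbc, h⟩) (mem_inl.2 (.inr h'))

lemma mem_diamondStage_succ_iff_of_inr_notMem (hG : Sum.inr c ∉ G) :
    G ∈ diamondStage d i (c + 1) ↔ G ∈ diamondStage d i c ∧ ¬ Fsub d c ⊆ G := by
  rw [not_Fsub_subset_iff]
  constructor
  · rintro ⟨hl, hr, hpair, a, hca, ha⟩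
    refine ⟨⟨hl, fun b h => ⟨(hr b h).1, ?_⟩, hpair, a, by omega, ha⟩, a, hca, ha⟩
    have := (hr b h).2
    have := Fin.val_ne_of_ne fun hbc : b = c => hG (hbc ▸ h)
    omega
  · rintro ⟨⟨hl, hr, hpair, -⟩, a, hca, ha⟩
    exact ⟨hl, fun b h => ⟨(hr b h).1, Nat.lt_succ_of_lt (hr b h).2⟩, hpair, a, hca, ha⟩

end Subdivision

lemma sdC_diamondStage (hi : i < d + 2) (ht : t < d + 1) :
    sdC (newV d t) (Fsub d t) (diamondStage d i t) = diamondStage d i (t + 1) := by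
  obtain ⟨c, rfl⟩ : ∃ c : Fin (d + 1), (c : ℕ) = t := ⟨⟨t, ht⟩, rfl⟩
  rw [newV_val]
  ext G
  by_cases hG : Sum.inr c ∈ G
  · rw [mem_sdC_of_mem (inr_notMem_diamondStage c) hG, mem_diamondStage_succ_iff_of_inr_mem hi hG]
  · rw [mem_sdC_of_notMem isComplex_diamondStage hG, mem_diamondStage_succ_iff_of_inr_notMem hG]

lemma foldl_sdC_GammaC (hi : i < d + 2) (ht : t ≤ d + 1) :
    (List.range t).foldl (fun Γ j => sdC (newV d j) (Fsub d j) Γ) (GammaC d i) =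
      diamondStage d i t := by
  induction t with
  | zero => exact (diamondStage_zero hi).symm
  | succ t ih =>
    rw [List.range_succ, List.foldl_append, ih (by omega), List.foldl_cons, List.foldl_nil,
      sdC_diamondStage hi (by omega)]

lemma Diam_iUnion {ι : Sort*} (B : ι → Set (Finset (V d))) :
    Diam d (⋃ i, B i) = ⋃ i, Diam d (B i) := by
  unfold Diam
  induction List.range (d + 1) generalizing B with
  | nil => rfl
  | cons j L ih => simp only [List.foldl_cons, sdC_iUnion, ih]

lemma DiamU_eq {I : Finset ℕ} (hI : ∀ i ∈ I, i < d + 2) :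
    DiamU d I = ⋃ i ∈ I, diamondStage d i (d + 1) := by
  have hGamma : GammaU d I = ⋃ i ∈ I, GammaC d i := by
    ext F
    simp [GammaU, GammaC, simplexOn]
  rw [DiamU, hGamma, Diam_iUnion]
  refine Set.iUnion_congr fun i => ?_
  rw [Diam_iUnion]
  exact Set.iUnion_congr fun hi => foldl_sdC_GammaC (hI i hi) le_rfl

end Stage

/-- The join of the simplex on `{0,…,ℓ}` with the boundary of the cross-polytope on the pairs
`{j, v_j}`, `ℓ < j ≤ d`; it is the image of `⋄(Γ_ℓ)` under `ψ_ℓ`. -/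
def diamondCone (d ℓ : ℕ) : Set (Finset (V d)) := {F |
  (∀ b : Fin (d + 1), Sum.inr b ∈ F → ℓ < b ∧ Sum.inl b.castSucc ∉ F) ∧
  Sum.inl (Fin.last (d + 1)) ∉ F}

section Swap

variable {d : ℕ} (c : Fin (d + 1)) {F : Finset (V d)}

lemma image_swap_mem_diamondStage {i : ℕ} (hi : i < c) (hF : F ∈ diamondStage d i (d + 1)) :
    F.image (Equiv.swap (Sum.inl c.castSucc) (Sum.inr c)) ∈ diamondStage d i (d + 1) := by
  obtain ⟨hl, hr, hpair, a, ha, haF⟩ := hF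
  simp only [diamondStage, Set.mem_ofPred_eq, mem_image_swap]
  refine ⟨fun a' h => ?_, fun b h => ?_, fun b hib h h' => ?_, a, ha, ?_⟩
  · by_cases ha' : a' = c.castSucc
    · rw [ha', Fin.val_castSucc]
      exact hi.ne'
    · exact hl a' (swap_inl_of_ne c ha' ▸ h)
  · by_cases hb : b = c
    · exact ⟨hb ▸ hi.le, b.isLt⟩
    · exact hr b (swap_inr_of_ne c hb ▸ h)
  · by_cases hb : b = c
    · subst hb
      rw [Equiv.swap_apply_right] at h
      rw [Equiv.swap_apply_left] at h'
      exact hpair b hib h' h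
    · rw [swap_inr_of_ne c hb] at h
      rw [swap_inl_of_ne c (Fin.castSucc_injective _ |>.ne hb)] at h'
      exact hpair b hib h h'
  · rwa [swap_inl_of_ne c fun h => by rw [h, Fin.val_castSucc] at ha; omega]

lemma image_swap_mem_diamondStage_iff {i : ℕ} (hi : i < c) :
    F.image (Equiv.swap (Sum.inl c.castSucc) (Sum.inr c)) ∈ diamondStage d i (d + 1) ↔
      F ∈ diamondStage d i (d + 1) := by
  refine ⟨fun h => ?_, image_swap_mem_diamondStage c hi⟩
  simpa only [image_swap_image_swap] using image_swap_mem_diamondStage c hi h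

lemma image_swap_mem_diamondCone_iff :
    F.image (Equiv.swap (Sum.inl c.castSucc) (Sum.inr c)) ∈ diamondCone d c ↔
      F ∈ diamondStage d c (d + 1) := by
  have hlast : Fin.last (d + 1) ≠ c.castSucc := (Fin.castSucc_lt_last c).ne'
  simp only [diamondCone, diamondStage, Set.mem_ofPred_eq, mem_image_swap,
    swap_inl_of_ne c hlast]
  constructor
  · rintro ⟨hr, hF⟩
    refine ⟨fun a h hac => ?_, fun b h => ?_, fun b hcb h h' => ?_, Fin.last _, le_rfl, hF⟩
    · obtain rfl : a = c.castSucc := Fin.ext hac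
      exact lt_irrefl _ (hr c (by rwa [Equiv.swap_apply_right])).1
    · by_cases hb : b = c
      · exact ⟨hb ▸ le_rfl, b.isLt⟩
      · exact ⟨(hr b (by rwa [swap_inr_of_ne c hb])).1.le, b.isLt⟩
    · have hb : b ≠ c := fun hb => hcb.ne (congrArg Fin.val hb).symm
      exact (hr b (by rwa [swap_inr_of_ne c hb])).2
        (by rwa [swap_inl_of_ne c (Fin.castSucc_injective _ |>.ne hb)])
  · rintro ⟨hl, hr, hpair, a, ha, haF⟩
    refine ⟨fun b h => ?_, ?_⟩
    · have hb : b ≠ c := by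
        rintro rfl
        exact hl _ (by rwa [Equiv.swap_apply_right] at h) (Fin.val_castSucc b)
      rw [swap_inr_of_ne c hb] at h
      have hcb : (c : ℕ) < b := lt_of_le_of_ne (hr b h).1 (fun h => hb (Fin.ext h).symm)
      rw [swap_inl_of_ne c (Fin.castSucc_injective _ |>.ne hb)]
      exact ⟨hcb, hpair b hcb h⟩
    · rwa [← Fin.last_le_iff.1 ha]

end Swap

section Cone

variable {d ℓ : ℕ} {F : Finset (V d)}

lemma mem_diamondCone_of_mem_diamondStage {j : ℕ} (hj : ℓ < j)
    (hF : F ∈ diamondStage d j (d + 1)) : F ∈ diamondCone d ℓ := by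
  obtain ⟨hl, hr, hpair, a, ha, haF⟩ := hF
  refine ⟨fun b h => ⟨by have := (hr b h).1; omega, ?_⟩, ?_⟩
  · rcases (hr b h).1.lt_or_eq with hjb | hjb
    · exact hpair b hjb h
    · exact fun h' => hl _ h' hjb.symm
  · rwa [← Fin.last_le_iff.1 ha]

lemma exists_mem_diamondStage_of_mem_diamondCone (hℓ : ℓ ≤ d) (hF : F ∈ diamondCone d ℓ) :
    ∃ j ∈ Finset.Ioc ℓ (d + 1), F ∈ diamondStage d j (d + 1) := by
  obtain ⟨hr, hlast⟩ := hF
  by_cases hnew : ∃ b : Fin (d + 1), Sum.inr b ∈ F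
  · obtain ⟨b₀, hb₀, hmin⟩ := Finset.exists_min_image
      (Finset.univ.filter fun b : Fin (d + 1) => Sum.inr b ∈ F) id
      (by simpa [Finset.filter_nonempty_iff] using hnew)
    simp only [Finset.mem_filter, Finset.mem_univ, true_and, id] at hb₀ hmin
    refine ⟨b₀, Finset.mem_Ioc.2 ⟨(hr b₀ hb₀).1, by omega⟩, fun a h hab => ?_,
      fun b h => ⟨hmin b h, b.isLt⟩, fun b _ h => (hr b h).2, Fin.last _, le_rfl, hlast⟩
    obtain rfl : a = b₀.castSucc := Fin.ext hab
    exact (hr b₀ hb₀).2 h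
  · push Not at hnew
    refine ⟨d + 1, Finset.mem_Ioc.2 ⟨by omega, le_rfl⟩, fun a h had => ?_,
      fun b h => absurd h (hnew b), fun b _ h => absurd h (hnew b), Fin.last _, le_rfl, hlast⟩
    exact hlast (Fin.ext (b := Fin.last (d + 1)) had ▸ h)

lemma mem_diamondCone_iff (hℓ : ℓ ≤ d) :
    F ∈ diamondCone d ℓ ↔ ∃ j ∈ Finset.Ioc ℓ (d + 1), F ∈ diamondStage d j (d + 1) :=
  ⟨exists_mem_diamondStage_of_mem_diamondCone hℓ, fun ⟨_, hj, hF⟩ =>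
    mem_diamondCone_of_mem_diamondStage (Finset.mem_Ioc.1 hj).1 hF⟩

end Cone

theorem stmt5_general (d ℓ : ℕ) (S : Finset ℕ) (hℓ : ℓ ≤ d)
    (hlt : ∀ i ∈ S, i < ℓ) :
    ∀ F : Finset (V d),
      F ∈ DiamU d (insert ℓ S) ↔
        F.image (⇑(Equiv.swap (origV d ℓ) (newV d ℓ))) ∈
          DiamU d (S ∪ Finset.Ioc ℓ (d+1)) := by
  intro F
  obtain ⟨c, rfl⟩ : ∃ c : Fin (d + 1), (c : ℕ) = ℓ := ⟨⟨ℓ, by omega⟩, rfl⟩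
  have hS : ∀ i ∈ S, i < d + 2 := fun i hi => by have := hlt i hi; omega
  have hI : ∀ i ∈ insert (c : ℕ) S, i < d + 2 := by
    simpa using ⟨by omega, hS⟩
  have hJ : ∀ i ∈ S ∪ Finset.Ioc (c : ℕ) (d + 1), i < d + 2 := by
    simpa [or_imp, forall_and] using ⟨hS, fun i _ hi => by omega⟩
  rw [DiamU_eq hI, DiamU_eq hJ, origV_val, newV_val]
  simp only [Set.mem_iUnion₂, Finset.mem_insert, Finset.mem_union, exists_prop, or_and_right,
    exists_or, exists_eq_left, ← image_swap_mem_diamondCone_iff, mem_diamondCone_iff hℓ]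
  rw [or_comm]
  exact or_congr_left (exists_congr fun i => and_congr_right fun hi =>
    (image_swap_mem_diamondStage_iff c (hlt i hi)).symm)

/-- `⋄(Γ_{i_1},…,Γ_{i_k},Γ_ℓ) ≅ ⋄(Γ_{i_1},…,Γ_{i_k},Γ_{ℓ+1},…,Γ_{d+1})`
via the vertex map switching `ℓ` and `v_ℓ`. -/
theorem stmt5 (d ℓ : ℕ) (S : Finset ℕ) (hS : S.Nonempty) (hℓ : ℓ ≤ d)
    (hlt : ∀ i ∈ S, i < ℓ) :
    ∀ F : Finset (V d),
      F ∈ DiamU d (insert ℓ S) ↔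
        F.image (⇑(Equiv.swap (origV d ℓ) (newV d ℓ))) ∈
          DiamU d (S ∪ Finset.Ioc ℓ (d+1)) :=
  stmt5_general d ℓ S hℓ hlt

end Paper
end
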